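/- arXiv:1509.06280 — 7 statements merged into one kernel-verified Lean document; each statement's English description precedes it below -/
import Mathlib

section
/- Let A be an associative algebra over a field F of characteristic 0, let e, h ∈ A with e invertible and e^{−1}he = h + 2, and let S ⊆ A be a subalgebra whose elements commute with both e and h, such that A has no zero divisors. If H_0, H_1, ..., H_s ∈ S satisfy H_0·h^0 + H_1·h^1 + ... + H_s·h^s = 0, then H_j = 0 for all j. (In other words, the elements 1, h, h², ... are left-linearly independent over the centralizer subalgebra S.) -/
/-- Over a field of characteristic 0, in an algebra `A` without zero divisors with
`e` invertible (inverse `v`) and `e⁻¹ h e = h + 2`, if `S` is a subalgebra whose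
elements commute with both `e` and `h`, then `1, h, h², ...` are left-linearly
independent over `S`: any relation `Σ_{j≤s} H_j h^j = 0` with `H_j ∈ S` forces all
`H_j = 0`. -/
theorem stmt2 {F A : Type*} [Field F] [CharZero F] [Ring A] [Algebra F A]
    [NoZeroDivisors A]
    (e h v : A) (hve : v * e = 1) (hev : e * v = 1)
    (hconj : v * h * e = h + 2)
    (S : Subalgebra F A)
    (hSe : ∀ a ∈ S, a * e = e * a) (hSh : ∀ a ∈ S, a * h = h * a)
    (s : ℕ) (H : ℕ → A) (hH : ∀ j, H j ∈ S)
    (hrel : ∑ j ∈ Finset.range (s + 1), H j * h ^ j = 0) :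
    ∀ j ≤ s, H j = 0 := by
  rcases subsingleton_or_nontrivial A with hA | hA
  · intro j _; exact Subsingleton.elim _ _
  haveI : CharZero A := charZero_of_injective_algebraMap (algebraMap F A).injective
  -- conjugation is multiplicative
  have hmul : ∀ x y : A, v * (x * y) * e = (v * x * e) * (v * y * e) := by
    intro x y
    have h1 : (v * x * e) * (v * y * e) = v * (x * ((e * v) * (y * e))) := by
      simp [mul_assoc]
    rw [h1, hev, one_mul]
    simp [mul_assoc]
  have phiS : ∀ a ∈ S, v * a * e = a := by
    intro a ha
    rw [mul_assoc, hSe a ha, ← mul_assoc, hve, one_mul]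
  have phih : ∀ j : ℕ, v * h ^ j * e = (h + 2) ^ j := by
    intro j
    induction j with
    | zero => simp [hve]
    | succ j ih =>
      rw [pow_succ, pow_succ, hmul, ih, hconj]
  have hc2 : Commute h (2 : A) := by
    simpa using (Nat.cast_commute 2 h).symm
  -- key cast commuting fact
  have hterm : ∀ (x : A) (j k : ℕ),
      x * (h ^ k * (2:A) ^ (j - k) * ((j.choose k : ℕ) : A)) =
        (x * (((j.choose k * 2 ^ (j - k) : ℕ)) : A)) * h ^ k := by
    intro x j k
    have c2k : Commute ((2:A) ^ (j - k)) (h ^ k) := hc2.symm.pow_pow _ _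
    have c1 : ((j.choose k * 2 ^ (j - k) : ℕ) : A) * h ^ k
        = h ^ k * (2:A) ^ (j - k) * ((j.choose k : ℕ) : A) := by
      push_cast
      rw [mul_assoc, (Nat.cast_commute (j.choose k) ((2:A) ^ (j-k) * h ^ k)).eq, c2k.eq]
    rw [← mul_assoc, mul_assoc x, ← c1, ← mul_assoc]
  induction s generalizing H with
  | zero =>
    intro j hj
    interval_cases j
    simpa using hrel
  | succ s ih =>
    -- conjugated relation
    have hrel2 : ∑ j ∈ Finset.range (s + 2), H j * (h + 2) ^ j = 0 := by
      have h0 : ∑ j ∈ Finset.range (s + 2), v * (H j * h ^ j) * e = 0 := by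
        rw [← Finset.sum_mul, ← Finset.mul_sum, hrel, mul_zero, zero_mul]
      rw [← h0]
      refine Finset.sum_congr rfl fun j _ => ?_
      rw [hmul, phiS _ (hH j), phih]
    have hdiff : ∑ j ∈ Finset.range (s + 2), H j * ((h + 2) ^ j - h ^ j) = 0 := by
      simp only [mul_sub, Finset.sum_sub_distrib, hrel2, hrel, sub_zero]
    set G : ℕ → A := fun k => ∑ j ∈ Finset.range (s + 2),
      if k < j then H j * (((j.choose k * 2 ^ (j - k) : ℕ)) : A) else 0 with hG
    have hGrel2 : ∑ k ∈ Finset.range (s + 2), G k * h ^ k = 0 := by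
      rw [← hdiff]
      simp only [hG, Finset.sum_mul, ite_mul, zero_mul]
      rw [Finset.sum_comm]
      refine Finset.sum_congr rfl fun j hj => ?_
      have hjlt : j < s + 2 := Finset.mem_range.mp hj
      have hexp : (h + 2) ^ j - h ^ j
          = ∑ k ∈ Finset.range j, h ^ k * (2:A) ^ (j - k) * ((j.choose k : ℕ) : A) := by
        rw [hc2.add_pow, Finset.sum_range_succ]
        simp
      rw [hexp, Finset.mul_sum]
      rw [← Finset.sum_subset (Finset.range_subset_range.mpr hjlt.le)
            (fun x _ hx => by rw [if_neg (by simpa using hx)])]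
      refine Finset.sum_congr rfl fun k hk => ?_
      rw [if_pos (Finset.mem_range.mp hk)]
      exact (hterm (H j) j k).symm
    have hGmem : ∀ k, G k ∈ S := by
      intro k
      simp only [hG]
      refine sum_mem fun j _ => ?_
      split
      · exact S.mul_mem (hH j) (Subalgebra.natCast_mem S _)
      · exact S.zero_mem
    have hGs1 : G (s + 1) = 0 :=
      Finset.sum_eq_zero fun j hj =>
        if_neg (by have := Finset.mem_range.mp hj; omega)
    have hGrel : ∑ k ∈ Finset.range (s + 1), G k * h ^ k = 0 := by
      rw [Finset.sum_range_succ, hGs1, zero_mul, add_zero] at hGrel2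
      exact hGrel2
    have hGs : G s = H (s + 1) * ((((s+1).choose s * 2 ^ (s + 1 - s) : ℕ)) : A) := by
      simp only [hG]
      rw [Finset.sum_eq_single (s + 1)]
      · rw [if_pos (Nat.lt_succ_self s)]
      · intro b hb hne
        exact if_neg (by have := Finset.mem_range.mp hb; omega)
      · intro hmem
        exact absurd (Finset.self_mem_range_succ (s + 1)) hmem
    have hH1 : H (s + 1) = 0 := by
      have h0 := ih G hGmem hGrel s le_rfl
      rw [hGs] at h0
      rcases mul_eq_zero.mp h0 with h | h
      · exact h
      · exfalso
        refine (Nat.cast_ne_zero.mpr ?_) h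
        have := Nat.choose_pos (Nat.le_succ s)
        positivity
    have hrel' : ∑ j ∈ Finset.range (s + 1), H j * h ^ j = 0 := by
      rw [Finset.sum_range_succ, hH1, zero_mul, add_zero] at hrel
      exact hrel
    intro j hj
    rcases Nat.eq_or_lt_of_le hj with rfl | hj'
    · exact hH1
    · exact ih H hH hrel' j (Nat.lt_succ_iff.mp hj')
end

section
/- Let W_d be the Weyl algebra in d variables over a field F of characteristic 0 with generators z_1,...,z_d, ∂_1,...,∂_d and relations [z_i, ∂_j] = δ_{ij} (all z's commuting among themselves and all ∂'s commuting among themselves, with the stated mixed relations). In the localization of W_d at the powers of z_d, define z_i' := z_i·z_d^{−1} and ∂_i' := z_d·∂_i for i < d, and ∂_d' := ∂_d + z_d^{−1}·(z_1∂_1 + ... + z_{d−1}∂_{d−1}). Then the elements z_1',...,z_{d−1}', z_d, ∂_1',...,∂_{d−1}', ∂_d' satisfy the Weyl algebra relations: [z_i', ∂_j'] = δ_{ij} for i,j < d, [z_d, ∂_d'] = 1 (up to the sign convention of the original relations), [z_i', z_d] = [z_i', ∂_d'] = [z_d, ∂_j'] = 0 for i, j < d, and all z_i', z_d commute among themselves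 and all ∂_i', ∂_d' commute among themselves. -/
/-- In (a ring containing) the localization of the Weyl algebra `W_d` (here `d = n+1`,
generators `z i, ∂ i` for `i : Fin (n+1)`, relations `[z i, ∂ j] = δ_{ij}`) at the
powers of the last variable `z_d` (with inverse `zi`), the new elements
`z_i' := z_i z_d⁻¹`, `∂_i' := z_d ∂_i` (for `i < d`) and
`∂_d' := ∂_d + z_d⁻¹ (z_1∂_1 + ⋯ + z_{d−1}∂_{d−1})`, together with `z_d`,
again satisfy the canonical Weyl algebra relations. -/
theorem stmt5 {F A : Type*} [Field F] [CharZero F] [Ring A] [Algebra F A] (n : ℕ)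
    (z p : Fin (n + 1) → A)
    (hzz : ∀ i j, z i * z j = z j * z i)
    (hpp : ∀ i j, p i * p j = p j * p i)
    (hzp : ∀ i j, z i * p j - p j * z i = if i = j then 1 else 0)
    (zi : A) (hzi1 : zi * z (Fin.last n) = 1) (hzi2 : z (Fin.last n) * zi = 1)
    (Z P : Fin n → A) (Pd : A)
    (hZ : ∀ i : Fin n, Z i = z i.castSucc * zi)
    (hP : ∀ i : Fin n, P i = z (Fin.last n) * p i.castSucc)
    (hPd : Pd = p (Fin.last n) + zi * ∑ i : Fin n, z i.castSucc * p i.castSucc) :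
    (∀ i j : Fin n, Z i * P j - P j * Z i = if i = j then 1 else 0) ∧
    (z (Fin.last n) * Pd - Pd * z (Fin.last n) = 1) ∧
    (∀ i : Fin n, Z i * z (Fin.last n) = z (Fin.last n) * Z i) ∧
    (∀ i : Fin n, Z i * Pd = Pd * Z i) ∧
    (∀ j : Fin n, z (Fin.last n) * P j = P j * z (Fin.last n)) ∧
    (∀ i j : Fin n, Z i * Z j = Z j * Z i) ∧
    (∀ i j : Fin n, P i * P j = P j * P i) ∧
    (∀ i : Fin n, P i * Pd = Pd * P i) := by
  set S : A := ∑ i : Fin n, z i.castSucc * p i.castSucc with hS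
  set d : Fin (n + 1) := Fin.last n with hd
  have hne : ∀ i : Fin n, (i.castSucc : Fin (n + 1)) ≠ d := fun i => (Fin.castSucc_lt_last i).ne
  -- basic commutation facts
  have hA1 : ∀ i : Fin n, z i.castSucc * p d = p d * z i.castSucc := fun i =>
    sub_eq_zero.mp (by rw [hzp, if_neg (hne i)])
  have hA2 : ∀ j : Fin n, z d * p j.castSucc = p j.castSucc * z d := fun j =>
    sub_eq_zero.mp (by rw [hzp, if_neg (Ne.symm (hne j))])
  have hA3 : ∀ i j : Fin n, z i.castSucc * p j.castSucc - p j.castSucc * z i.castSucc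
      = if i = j then 1 else 0 := fun i j => by
    rw [hzp]; simp [Fin.castSucc_inj]
  have hzd : z d * p d - p d * z d = 1 := by rw [hzp]; simp
  -- zi commutes with anything that commutes with z d
  have key : ∀ x : A, z d * x = x * z d → zi * x = x * zi := by
    intro x hx
    calc zi * x = zi * x * (z d * zi) := by rw [hzi2, mul_one]
      _ = zi * (x * z d) * zi := by simp only [mul_assoc]
      _ = zi * (z d * x) * zi := by rw [hx]
      _ = (zi * z d) * (x * zi) := by simp only [mul_assoc]
      _ = x * zi := by rw [hzi1, one_mul]
  have hziz : ∀ i, zi * z i = z i * zi := fun i => key _ (hzz _ _)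
  have hzip : ∀ j : Fin n, zi * p j.castSucc = p j.castSucc * zi := fun j => key _ (hA2 j)
  have hzipd : zi * p d = p d * zi - zi * zi := by
    have h2 : p d * z d = z d * p d - 1 := by rw [← hzd]; noncomm_ring
    calc zi * p d = zi * p d * (z d * zi) := by rw [hzi2, mul_one]
      _ = zi * (p d * z d) * zi := by simp only [mul_assoc]
      _ = zi * (z d * p d - 1) * zi := by rw [h2]
      _ = (zi * z d) * (p d * zi) - zi * zi := by noncomm_ring
      _ = p d * zi - zi * zi := by rw [hzi1, one_mul]
  -- commutation with the sum S
  have hSz : z d * S = S * z d := by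
    rw [hS, Finset.mul_sum, Finset.sum_mul]
    refine Finset.sum_congr rfl fun k _ => ?_
    rw [← mul_assoc, hzz d k.castSucc, mul_assoc, hA2 k, ← mul_assoc]
  have hziS : zi * S = S * zi := key S hSz
  have hzS : ∀ i : Fin n, z i.castSucc * S - S * z i.castSucc = z i.castSucc := by
    intro i
    rw [hS, Finset.mul_sum, Finset.sum_mul, ← Finset.sum_sub_distrib]
    have h : ∀ k ∈ (Finset.univ : Finset (Fin n)),
        z i.castSucc * (z k.castSucc * p k.castSucc)
          - z k.castSucc * p k.castSucc * z i.castSucc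
        = if k = i then z i.castSucc else 0 := by
      intro k _
      have h3 := hA3 i k
      calc z i.castSucc * (z k.castSucc * p k.castSucc)
            - z k.castSucc * p k.castSucc * z i.castSucc
          = (z i.castSucc * z k.castSucc) * p k.castSucc
            - z k.castSucc * (p k.castSucc * z i.castSucc) := by noncomm_ring
        _ = z k.castSucc * (z i.castSucc * p k.castSucc - p k.castSucc * z i.castSucc) := by
            rw [hzz i.castSucc k.castSucc]; noncomm_ring
        _ = z k.castSucc * (if i = k then 1 else 0) := by rw [h3]
        _ = if k = i then z i.castSucc else 0 := by
            rcases eq_or_ne i k with h | h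
            · simp [h]
            · simp [h, h.symm]
    rw [Finset.sum_congr rfl h, Finset.sum_ite_eq' Finset.univ i fun _ => z i.castSucc]
    simp
  have hpS : ∀ i : Fin n, p i.castSucc * S - S * p i.castSucc = - p i.castSucc := by
    intro i
    rw [hS, Finset.mul_sum, Finset.sum_mul, ← Finset.sum_sub_distrib]
    have h : ∀ k ∈ (Finset.univ : Finset (Fin n)),
        p i.castSucc * (z k.castSucc * p k.castSucc)
          - z k.castSucc * p k.castSucc * p i.castSucc
        = if k = i then - p i.castSucc else 0 := by
      intro k _
      have h3 := hA3 k i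
      calc p i.castSucc * (z k.castSucc * p k.castSucc)
            - z k.castSucc * p k.castSucc * p i.castSucc
          = (p i.castSucc * z k.castSucc) * p k.castSucc
            - z k.castSucc * (p k.castSucc * p i.castSucc) := by noncomm_ring
        _ = (p i.castSucc * z k.castSucc - z k.castSucc * p i.castSucc) * p k.castSucc := by
            rw [hpp k.castSucc i.castSucc]; noncomm_ring
        _ = (-(if k = i then 1 else 0)) * p k.castSucc := by
            rw [show p i.castSucc * z k.castSucc - z k.castSucc * p i.castSucc
              = -(if k = i then 1 else 0) from by rw [← h3]; noncomm_ring]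
        _ = if k = i then - p i.castSucc else 0 := by
            rcases eq_or_ne k i with h | h
            · simp [h]
            · simp [h]
    rw [Finset.sum_congr rfl h, Finset.sum_ite_eq' Finset.univ i fun _ => - p i.castSucc]
    simp
  refine ⟨?_, ?_, ?_, ?_, ?_, ?_, ?_, ?_⟩
  · -- [Z i, P j] = δ_{ij}
    intro i j
    rw [hZ, hP]
    have l : z i.castSucc * zi * (z d * p j.castSucc) = z i.castSucc * p j.castSucc := by
      calc z i.castSucc * zi * (z d * p j.castSucc)
          = z i.castSucc * (zi * z d) * p j.castSucc := by simp only [mul_assoc]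
        _ = z i.castSucc * p j.castSucc := by rw [hzi1, mul_one]
    have hc : ∀ x : A, (if i = j then (1 : A) else 0) * x
        = x * (if i = j then (1 : A) else 0) := by
      intro x; split_ifs <;> simp
    have r : z d * p j.castSucc * (z i.castSucc * zi)
        = z i.castSucc * p j.castSucc - (if i = j then 1 else 0) := by
      have h3 : p j.castSucc * z i.castSucc
          = z i.castSucc * p j.castSucc - (if i = j then 1 else 0) := by
        rw [← hA3 i j]; noncomm_ring
      calc z d * p j.castSucc * (z i.castSucc * zi)
          = z d * (p j.castSucc * z i.castSucc) * zi := by simp only [mul_assoc]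
        _ = z d * (z i.castSucc * p j.castSucc - (if i = j then 1 else 0)) * zi := by rw [h3]
        _ = (z d * z i.castSucc) * (p j.castSucc * zi)
            - z d * ((if i = j then 1 else 0) * zi) := by noncomm_ring
        _ = (z i.castSucc * z d) * (p j.castSucc * zi)
            - z d * (zi * (if i = j then 1 else 0)) := by rw [hzz d i.castSucc, hc zi]
        _ = z i.castSucc * ((z d * p j.castSucc) * zi)
            - (z d * zi) * (if i = j then 1 else 0) := by simp only [mul_assoc]
        _ = z i.castSucc * ((p j.castSucc * z d) * zi) - (if i = j then 1 else 0) := by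
            rw [hA2 j, hzi2, one_mul]
        _ = z i.castSucc * (p j.castSucc * (z d * zi)) - (if i = j then 1 else 0) := by
            simp only [mul_assoc]
        _ = z i.castSucc * p j.castSucc - (if i = j then 1 else 0) := by rw [hzi2, mul_one]
    rw [l, r]; noncomm_ring
  · -- [z d, Pd] = 1
    rw [hPd]
    have e1 : z d * (zi * S) = S := by rw [← mul_assoc, hzi2, one_mul]
    have e2 : zi * S * z d = S := by rw [mul_assoc, ← hSz, ← mul_assoc, hzi1, one_mul]
    calc z d * (p d + zi * S) - (p d + zi * S) * z d
        = (z d * p d - p d * z d) + (z d * (zi * S) - zi * S * z d) := by noncomm_ring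
      _ = 1 := by rw [hzd, e1, e2]; noncomm_ring
  · -- Z i commutes with z d
    intro i
    rw [hZ]
    calc z i.castSucc * zi * z d = z i.castSucc * (zi * z d) := by rw [mul_assoc]
      _ = z i.castSucc := by rw [hzi1, mul_one]
      _ = z i.castSucc * (z d * zi) := by rw [hzi2, mul_one]
      _ = (z i.castSucc * z d) * zi := by rw [mul_assoc]
      _ = z d * (z i.castSucc * zi) := by rw [hzz i.castSucc d, mul_assoc]
  · -- Z i commutes with Pd
    intro i
    rw [hZ, hPd]
    have l1 : z i.castSucc * zi * p d
        = p d * (z i.castSucc * zi) - z i.castSucc * (zi * zi) := by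
      calc z i.castSucc * zi * p d = z i.castSucc * (zi * p d) := by rw [mul_assoc]
        _ = z i.castSucc * (p d * zi - zi * zi) := by rw [hzipd]
        _ = (z i.castSucc * p d) * zi - z i.castSucc * (zi * zi) := by noncomm_ring
        _ = (p d * z i.castSucc) * zi - z i.castSucc * (zi * zi) := by rw [hA1 i]
        _ = p d * (z i.castSucc * zi) - z i.castSucc * (zi * zi) := by rw [mul_assoc]
    have l2 : z i.castSucc * zi * (zi * S) = zi * S * (z i.castSucc * zi)
        + z i.castSucc * (zi * zi) := by
      have hSzi : S * z i.castSucc = z i.castSucc * S - z i.castSucc := by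
        rw [sub_eq_iff_eq_add.mp (hzS i)]; noncomm_ring
      calc z i.castSucc * zi * (zi * S)
          = z i.castSucc * (zi * (zi * S)) := by rw [mul_assoc]
        _ = z i.castSucc * (zi * (S * zi)) := by rw [hziS]
        _ = ((z i.castSucc * zi) * S) * zi := by simp only [mul_assoc]
        _ = ((zi * z i.castSucc) * S) * zi := by rw [hziz i.castSucc]
        _ = zi * ((z i.castSucc * S) * zi) := by simp only [mul_assoc]
        _ = zi * ((S * z i.castSucc + z i.castSucc) * zi) := by
            rw [show z i.castSucc * S = S * z i.castSucc + z i.castSucc from by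
              rw [hSzi]; noncomm_ring]
        _ = zi * S * (z i.castSucc * zi) + (zi * z i.castSucc) * zi := by noncomm_ring
        _ = zi * S * (z i.castSucc * zi) + z i.castSucc * (zi * zi) := by
            rw [hziz i.castSucc]; noncomm_ring
    calc z i.castSucc * zi * (p d + zi * S)
        = z i.castSucc * zi * p d + z i.castSucc * zi * (zi * S) := by noncomm_ring
      _ = (p d * (z i.castSucc * zi) - z i.castSucc * (zi * zi))
          + (zi * S * (z i.castSucc * zi) + z i.castSucc * (zi * zi)) := by rw [l1, l2]
      _ = (p d + zi * S) * (z i.castSucc * zi) := by noncomm_ring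
  · -- z d commutes with P j
    intro j
    rw [hP]
    calc z d * (z d * p j.castSucc) = z d * (p j.castSucc * z d) := by rw [hA2 j]
      _ = (z d * p j.castSucc) * z d := by rw [mul_assoc]
  · -- Z's commute
    intro i j
    rw [hZ, hZ]
    calc z i.castSucc * zi * (z j.castSucc * zi)
        = z i.castSucc * ((zi * z j.castSucc) * zi) := by simp only [mul_assoc]
      _ = z i.castSucc * ((z j.castSucc * zi) * zi) := by rw [hziz j.castSucc]
      _ = (z i.castSucc * z j.castSucc) * (zi * zi) := by simp only [mul_assoc]
      _ = (z j.castSucc * z i.castSucc) * (zi * zi) := by rw [hzz i.castSucc j.castSucc]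
      _ = z j.castSucc * ((z i.castSucc * zi) * zi) := by simp only [mul_assoc]
      _ = z j.castSucc * ((zi * z i.castSucc) * zi) := by rw [hziz i.castSucc]
      _ = z j.castSucc * zi * (z i.castSucc * zi) := by simp only [mul_assoc]
  · -- P's commute
    intro i j
    rw [hP, hP]
    calc z d * p i.castSucc * (z d * p j.castSucc)
        = z d * ((p i.castSucc * z d) * p j.castSucc) := by simp only [mul_assoc]
      _ = z d * ((z d * p i.castSucc) * p j.castSucc) := by rw [hA2 i]
      _ = (z d * z d) * (p i.castSucc * p j.castSucc) := by simp only [mul_assoc]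
      _ = (z d * z d) * (p j.castSucc * p i.castSucc) := by rw [hpp i.castSucc j.castSucc]
      _ = z d * ((z d * p j.castSucc) * p i.castSucc) := by simp only [mul_assoc]
      _ = z d * ((p j.castSucc * z d) * p i.castSucc) := by rw [hA2 j]
      _ = z d * p j.castSucc * (z d * p i.castSucc) := by simp only [mul_assoc]
  · -- P i commutes with Pd
    intro i
    rw [hP, hPd]
    have l1 : z d * p i.castSucc * p d = p d * (z d * p i.castSucc) + p i.castSucc := by
      calc z d * p i.castSucc * p d = z d * (p i.castSucc * p d) := by rw [mul_assoc]
        _ = z d * (p d * p i.castSucc) := by rw [hpp i.castSucc d]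
        _ = (z d * p d) * p i.castSucc := by rw [mul_assoc]
        _ = (p d * z d + 1) * p i.castSucc := by
            rw [show z d * p d = p d * z d + 1 from by rw [← hzd]; noncomm_ring]
        _ = p d * (z d * p i.castSucc) + p i.castSucc := by noncomm_ring
    have l2 : z d * p i.castSucc * (zi * S) = zi * S * (z d * p i.castSucc) - p i.castSucc := by
      have e2 : zi * S * z d = S := by rw [mul_assoc, ← hSz, ← mul_assoc, hzi1, one_mul]
      have hpS' : p i.castSucc * S = S * p i.castSucc - p i.castSucc := by
        rw [sub_eq_iff_eq_add.mp (hpS i)]; noncomm_ring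
      calc z d * p i.castSucc * (zi * S)
          = z d * ((p i.castSucc * zi) * S) := by simp only [mul_assoc]
        _ = z d * ((zi * p i.castSucc) * S) := by rw [hzip i]
        _ = (z d * zi) * (p i.castSucc * S) := by simp only [mul_assoc]
        _ = p i.castSucc * S := by rw [hzi2, one_mul]
        _ = S * p i.castSucc - p i.castSucc := hpS'
        _ = (zi * S * z d) * p i.castSucc - p i.castSucc := by rw [e2]
        _ = zi * S * (z d * p i.castSucc) - p i.castSucc := by simp only [mul_assoc]
    calc z d * p i.castSucc * (p d + zi * S)
        = z d * p i.castSucc * p d + z d * p i.castSucc * (zi * S) := by noncomm_ring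
      _ = (p d * (z d * p i.castSucc) + p i.castSucc)
          + (zi * S * (z d * p i.castSucc) - p i.castSucc) := by rw [l1, l2]
      _ = (p d + zi * S) * (z d * p i.castSucc) := by noncomm_ring
end

section
/- Let H be an associative unital algebra over a field F of characteristic 0 and e ∈ H such that ad e: H → H, x ↦ ex − xe, is locally nilpotent. Define, on the direct sum ⊕_{n ∈ (1/2)ℤ} H·t^n, the multiplication (x t^n)·(y t^m) := Σ_{i≥0} binom(n, i)·x·(ad e)^i(y)·t^{n+m−i}, where binom(n,i) = n(n−1)···(n−i+1)/i! for n ∈ (1/2)ℤ (the sum is finite by local nilpotency). Then this multiplication is associative. -/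
set_option linter.unusedSectionVars false

open Finset

noncomputable def bi {F : Type*} [Field F] (u : F) (n : ℕ) : F :=
  (∏ j ∈ Finset.range n, (u - j)) / (Nat.factorial n : F)

section BI
variable {F : Type*} [Field F] [CharZero F]

lemma bi_zero (u : F) : bi u 0 = 1 := by simp [bi]

lemma bi_succ_mul (u : F) (n : ℕ) : ((n : F) + 1) * bi u (n + 1) = bi u n * (u - n) := by
  have h1 : (Nat.factorial n : F) ≠ 0 := Nat.cast_ne_zero.2 (Nat.factorial_ne_zero n)
  have h2 : ((n : F) + 1) ≠ 0 := by exact_mod_cast (Nat.cast_ne_zero (R := F)).2 (Nat.succ_ne_zero n)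
  unfold bi
  rw [Finset.prod_range_succ, Nat.factorial_succ]
  push_cast
  field_simp

lemma bi_vandermonde (w v : F) : ∀ b : ℕ,
    bi (w + v) b = ∑ r ∈ Finset.range (b + 1), bi w r * bi v (b - r) := by
  intro b
  induction b with
  | zero => simp [bi_zero]
  | succ b IH =>
    have hb1 : ((b : F) + 1) ≠ 0 := by
      exact_mod_cast (Nat.cast_ne_zero (R := F)).2 (Nat.succ_ne_zero b)
    apply mul_left_cancel₀ hb1
    rw [bi_succ_mul, IH]
    -- RHS : ((b:F)+1) * ∑_{r<b+2} bi w r * bi v (b+1-r)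
    rw [Finset.mul_sum]
    have hsplit : ∀ r ∈ Finset.range (b + 2),
        ((b : F) + 1) * (bi w r * bi v (b + 1 - r)) =
          (r : F) * (bi w r * bi v (b + 1 - r))
          + ((b + 1 - r : ℕ) : F) * (bi w r * bi v (b + 1 - r)) := by
      intro r hr
      have hr' : r ≤ b + 1 := by simpa [Nat.lt_succ_iff] using hr
      have : ((b + 1 - r : ℕ) : F) = (b : F) + 1 - (r : F) := by
        push_cast [Nat.cast_sub hr']; ring
      rw [this]; ring
    rw [Finset.sum_congr rfl hsplit, Finset.sum_add_distrib]
    have hA : (∑ r ∈ Finset.range (b + 2), (r : F) * (bi w r * bi v (b + 1 - r)))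
        = ∑ r ∈ Finset.range (b + 1), bi w r * (w - r) * bi v (b - r) := by
      rw [Finset.sum_range_succ']
      simp only [Nat.cast_zero, zero_mul, add_zero]
      refine Finset.sum_congr rfl fun r hr => ?_
      have h1 : b + 1 - (r + 1) = b - r := by omega
      have h2 : ((r : F) + 1) * bi w (r + 1) = bi w r * (w - r) := bi_succ_mul w r
      push_cast
      calc ((r : F) + 1) * (bi w (r + 1) * bi v (b - r))
          = (((r : F) + 1) * bi w (r + 1)) * bi v (b - r) := by ring
        _ = bi w r * (w - r) * bi v (b - r) := by rw [h2]
    have hB : (∑ r ∈ Finset.range (b + 2), ((b + 1 - r : ℕ) : F) * (bi w r * bi v (b + 1 - r)))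
        = ∑ r ∈ Finset.range (b + 1), bi w r * bi v (b - r) * (v - ((b - r : ℕ) : F)) := by
      rw [Finset.sum_range_succ]
      simp only [Nat.sub_self, Nat.cast_zero, zero_mul, add_zero]
      refine Finset.sum_congr rfl fun r hr => ?_
      have hr' : r ≤ b := by simpa [Nat.lt_succ_iff] using hr
      have h1 : b + 1 - r = (b - r) + 1 := by omega
      rw [h1]
      have h2 : (((b - r : ℕ) : F) + 1) * bi v ((b - r) + 1) = bi v (b - r) * (v - (b - r : ℕ)) :=
        bi_succ_mul v (b - r)
      push_cast
      calc (((b - r : ℕ) : F) + 1) * (bi w r * bi v ((b - r) + 1))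
          = bi w r * ((((b - r : ℕ) : F) + 1) * bi v ((b - r) + 1)) := by ring
        _ = bi w r * (bi v (b - r) * (v - ((b - r : ℕ) : F))) := by rw [h2]
        _ = bi w r * bi v (b - r) * (v - ((b - r : ℕ) : F)) := by ring
    rw [hA, hB, ← Finset.sum_add_distrib, Finset.sum_mul]
    refine Finset.sum_congr rfl fun r hr => ?_
    have hr' : r ≤ b := by simpa [Nat.lt_succ_iff] using hr
    have : ((b - r : ℕ) : F) = (b : F) - r := by rw [Nat.cast_sub hr']
    rw [this]; ring

lemma bi_add_choose (u : F) (a r : ℕ) :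
    bi u (a + r) * ((a + r).choose a : F) = bi u a * bi (u - a) r := by
  have hfac : ((a + r).choose a : F) * (Nat.factorial a : F) * (Nat.factorial r : F)
      = (Nat.factorial (a + r) : F) := by
    have := Nat.choose_mul_factorial_mul_factorial (Nat.le_add_right a r)
    have h2 : a + r - a = r := by omega
    rw [h2] at this
    exact_mod_cast congrArg (Nat.cast : ℕ → F) this
  have hprod : (∏ j ∈ Finset.range (a + r), (u - j))
      = (∏ j ∈ Finset.range a, (u - j)) * ∏ j ∈ Finset.range r, ((u - a) - j) := by
    rw [Finset.prod_range_add]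
    congr 1
    refine Finset.prod_congr rfl fun j _ => ?_
    push_cast; ring
  have h1 : (Nat.factorial a : F) ≠ 0 := Nat.cast_ne_zero.2 (Nat.factorial_ne_zero a)
  have h2 : (Nat.factorial r : F) ≠ 0 := Nat.cast_ne_zero.2 (Nat.factorial_ne_zero r)
  have h3 : (Nat.factorial (a + r) : F) ≠ 0 := Nat.cast_ne_zero.2 (Nat.factorial_ne_zero _)
  unfold bi
  rw [hprod]
  field_simp
  rw [← hfac]
  ring

lemma bi_key (u v : F) (a b : ℕ) :
    bi u a * bi (u + v - a) b
      = ∑ r ∈ Finset.range (b + 1), bi u (a + r) * ((a + r).choose a : F) * bi v (b - r) := by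
  have : u + v - a = (u - a) + v := by ring
  rw [this, bi_vandermonde, Finset.mul_sum]
  exact Finset.sum_congr rfl fun r _ => by rw [bi_add_choose]; ring

end BI

section AD
variable {F H : Type*} [Field F] [CharZero F] [Ring H] [Algebra F H]

/-- the inner derivation -/
def adf (e : H) : H → H := fun a => e * a - a * e

lemma adf_zero (e : H) : adf e 0 = 0 := by simp [adf]

lemma adf_iterate_zero (e : H) (n : ℕ) : (adf e)^[n] 0 = 0 :=
  Function.iterate_fixed (adf_zero e) n

lemma adf_iterate_eventually (e : H) {y : H} {N : ℕ} (hN : (adf e)^[N] y = 0)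
    {i : ℕ} (hi : N ≤ i) : (adf e)^[i] y = 0 := by
  have : i = (i - N) + N := by omega
  rw [this, Function.iterate_add_apply, hN, adf_iterate_zero]

lemma adf_add (e : H) (x y : H) : adf e (x + y) = adf e x + adf e y := by
  simp only [adf]; noncomm_ring

/-- as an AddMonoidHom -/
def adfHom (e : H) : H →+ H := AddMonoidHom.mk' (adf e) (adf_add e)

lemma adf_sum (e : H) {α : Type*} (s : Finset α) (g : α → H) :
    adf e (∑ i ∈ s, g i) = ∑ i ∈ s, adf e (g i) :=
  map_sum (adfHom e) g s

lemma adf_nsmul (e : H) (n : ℕ) (x : H) : adf e (n • x) = n • adf e x :=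
  AddMonoidHom.map_nsmul (adfHom e) n x

lemma adf_smul (e : H) (c : F) (x : H) : adf e (c • x) = c • adf e x := by
  simp only [adf, mul_smul_comm, smul_mul_assoc, smul_sub]

lemma adf_iterate_smul (e : H) (c : F) (x : H) (n : ℕ) :
    (adf e)^[n] (c • x) = c • (adf e)^[n] x := by
  induction n with
  | zero => simp
  | succ n IH => rw [Function.iterate_succ_apply', IH, adf_smul, Function.iterate_succ_apply']

lemma adf_mul (e : H) (x y : H) : adf e (x * y) = adf e x * y + x * adf e y := by
  simp only [adf]; noncomm_ring

lemma adf_leibniz (e : H) (x y : H) (n : ℕ) :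
    (adf e)^[n] (x * y)
      = ∑ s ∈ Finset.range (n + 1), n.choose s • ((adf e)^[s] x * (adf e)^[n - s] y) := by
  induction n with
  | zero => simp
  | succ n IH =>
    rw [Function.iterate_succ_apply', IH, adf_sum]
    have hterm : ∀ s ∈ Finset.range (n + 1),
        adf e (n.choose s • ((adf e)^[s] x * (adf e)^[n - s] y))
          = n.choose s • ((adf e)^[s + 1] x * (adf e)^[n - s] y)
            + n.choose s • ((adf e)^[s] x * (adf e)^[(n - s) + 1] y) := by
      intro s hs
      rw [adf_nsmul, adf_mul, smul_add, Function.iterate_succ_apply', Function.iterate_succ_apply']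
    rw [Finset.sum_congr rfl hterm, Finset.sum_add_distrib]
    set X : ℕ → H := fun s => (adf e)^[s] x with hX
    set Y : ℕ → H := fun s => (adf e)^[s] y with hY
    set f : ℕ → H := fun s => n.choose s • (X s * Y (n + 1 - s)) with hf
    have hB : (∑ s ∈ Finset.range (n + 1), n.choose s • (X s * Y ((n - s) + 1)))
        = (∑ s ∈ Finset.range (n + 1), f (s + 1)) + f 0 := by
      have e1 : (∑ s ∈ Finset.range (n + 1), n.choose s • (X s * Y ((n - s) + 1)))
          = ∑ s ∈ Finset.range (n + 1), f s := by
        refine Finset.sum_congr rfl fun s hs => ?_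
        have : (n - s) + 1 = n + 1 - s := by
          have := Finset.mem_range.mp hs; omega
        rw [hf]; simp only []; rw [this]
      have hfz : f (n + 1) = 0 := by
        rw [hf]; simp [Nat.choose_succ_self]
      have e2 : (∑ s ∈ Finset.range (n + 2), f s) = ∑ s ∈ Finset.range (n + 1), f s := by
        rw [show n + 2 = (n + 1) + 1 from rfl, Finset.sum_range_succ, hfz, add_zero]
      rw [e1, ← e2, Finset.sum_range_succ']
    rw [hB]
    have hR : (∑ s ∈ Finset.range (n + 2), (n + 1).choose s • (X s * Y (n + 1 - s)))
        = (∑ s ∈ Finset.range (n + 1),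
            (n.choose s • (X (s + 1) * Y (n - s)) + n.choose (s + 1) • (X (s + 1) * Y (n - s))))
          + f 0 := by
      rw [Finset.sum_range_succ']
      congr 1
      · refine Finset.sum_congr rfl fun s hs => ?_
        rw [Nat.choose_succ_succ, add_smul]
        congr 2 <;> simp [Nat.succ_sub_succ]
      · simp [hf]
    rw [hR, Finset.sum_add_distrib]
    have hfs : ∀ s ∈ Finset.range (n + 1),
        f (s + 1) = n.choose (s + 1) • (X (s + 1) * Y (n - s)) := by
      intro s hs
      rw [hf]; simp [Nat.succ_sub_succ]
    rw [Finset.sum_congr rfl hfs]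
    abel
end AD

section MAIN
variable {F H : Type*} [Field F] [CharZero F] [Ring H] [Algebra F H]
variable (e : H) (mul : (ℤ →₀ H) → (ℤ →₀ H) → (ℤ →₀ H))

lemma adf_def : (fun y : H => e * y - y * e) = adf e := rfl

lemma single_sum' {β : Type*} (a : ℤ) (s : Finset β) (g : β → H) :
    Finsupp.single a (∑ b ∈ s, g b) = ∑ b ∈ s, Finsupp.single a (g b) :=
  map_sum (Finsupp.singleAddHom a) g s

section
variable (hladd : ∀ a b c, mul (a + b) c = mul a c + mul b c)
variable (hradd : ∀ a b c, mul a (b + c) = mul a b + mul a c)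
include hladd hradd

lemma mul_zero_left (c : ℤ →₀ H) : mul 0 c = 0 := by
  have h := hladd 0 0 c
  rw [add_zero] at h
  exact (add_eq_left.mp h.symm)

lemma mul_zero_right (a : ℤ →₀ H) : mul a 0 = 0 := by
  have h := hradd a 0 0
  rw [add_zero] at h
  exact (add_eq_left.mp h.symm)

lemma mul_sum_left {α : Type*} (s : Finset α) (f : α → (ℤ →₀ H)) (c : ℤ →₀ H) :
    mul (∑ i ∈ s, f i) c = ∑ i ∈ s, mul (f i) c := by
  induction s using Finset.cons_induction with
  | empty => simpa using mul_zero_left mul hladd hradd c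
  | cons a s ha IH => rw [Finset.sum_cons, hladd, IH, Finset.sum_cons]

lemma mul_sum_right {α : Type*} (s : Finset α) (a : ℤ →₀ H) (f : α → (ℤ →₀ H)) :
    mul a (∑ i ∈ s, f i) = ∑ i ∈ s, mul a (f i) := by
  induction s using Finset.cons_induction with
  | empty => simpa using mul_zero_right mul hladd hradd a
  | cons b s hb IH => rw [Finset.sum_cons, hradd, IH, Finset.sum_cons]
end

section
variable (hsingle : ∀ (k l : ℤ) (x y : H),
      mul (Finsupp.single k x) (Finsupp.single l y) =
        ∑ᶠ i : ℕ, Finsupp.single (k + l - 2 * (i : ℤ))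
          (((∏ j ∈ Finset.range i, ((k : F) / 2 - (j : F))) / (Nat.factorial i : F)) •
            (x * (fun y => e * y - y * e)^[i] y)))
include hsingle

lemma mul_single_single (k l : ℤ) (x y : H) (c c' : F) (N : ℕ)
    (hN : (adf e)^[N] y = 0) :
    mul (Finsupp.single k (c • x)) (Finsupp.single l (c' • y)) =
      ∑ i ∈ Finset.range N, Finsupp.single (k + l - 2 * (i : ℤ))
        ((c * c' * bi ((k : F) / 2) i) • (x * (adf e)^[i] y)) := by
  rw [hsingle k l (c • x) (c' • y)]
  have hfun : ∀ i : ℕ,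
      Finsupp.single (k + l - 2 * (i : ℤ))
        (((∏ j ∈ Finset.range i, ((k : F) / 2 - (j : F))) / (Nat.factorial i : F)) •
          ((c • x) * (fun y => e * y - y * e)^[i] (c' • y)))
      = Finsupp.single (k + l - 2 * (i : ℤ))
          ((c * c' * bi ((k : F) / 2) i) • (x * (adf e)^[i] y)) := by
    intro i
    congr 1
    rw [adf_def, adf_iterate_smul, smul_mul_assoc, mul_smul_comm, smul_smul, smul_smul]
    congr 1
    rw [bi]
    ring
  rw [finsum_congr hfun]
  apply finsum_eq_sum_of_support_subset
  intro i hi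
  simp only [Finset.coe_range, Set.mem_Iio]
  by_contra hlt
  push_neg at hlt
  apply hi
  have h0 : (adf e)^[i] y = 0 := adf_iterate_eventually e hN hlt
  simp [h0]
end

lemma adf_iterate_mul_zero {y z : H} {N : ℕ} (hy : (adf e)^[N] y = 0)
    (hz : (adf e)^[N] z = 0) (j : ℕ) {i : ℕ} (hi : 2 * N ≤ i) :
    (adf e)^[i] (y * (adf e)^[j] z) = 0 := by
  rw [adf_leibniz]
  apply Finset.sum_eq_zero
  intro s hs
  by_cases h : N ≤ s
  · rw [adf_iterate_eventually e hy h]; simp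
  · rw [← Function.iterate_add_apply, adf_iterate_eventually e hz (by omega : N ≤ (i - s) + j)]
    simp

section
variable (hladd : ∀ a b c, mul (a + b) c = mul a c + mul b c)
variable (hradd : ∀ a b c, mul a (b + c) = mul a b + mul a c)
variable (hsingle : ∀ (k l : ℤ) (x y : H),
      mul (Finsupp.single k x) (Finsupp.single l y) =
        ∑ᶠ i : ℕ, Finsupp.single (k + l - 2 * (i : ℤ))
          (((∏ j ∈ Finset.range i, ((k : F) / 2 - (j : F))) / (Nat.factorial i : F)) •
            (x * (fun y => e * y - y * e)^[i] y)))
include hladd hradd hsingle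

lemma assoc_single (k l m : ℤ) (x y z : H) (N : ℕ)
    (hy : (adf e)^[N] y = 0) (hz : (adf e)^[N] z = 0) :
    mul (mul (Finsupp.single k x) (Finsupp.single l y)) (Finsupp.single m z)
      = mul (Finsupp.single k x) (mul (Finsupp.single l y) (Finsupp.single m z)) := by
  classical
  set u : F := (k : F) / 2 with hu
  set v : F := (l : F) / 2 with hv
  set d : H → H := adf e with hd
  set T : ℕ → ℕ → (ℤ →₀ H) := fun a b =>
    Finsupp.single (k + l + m - 2 * (a : ℤ) - 2 * (b : ℤ)) (x * d^[a] y * d^[b] z) with hT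
  -- terms of T vanish when indices are large
  have hT0 : ∀ a b : ℕ, N ≤ a ∨ N ≤ b → T a b = 0 := by
    intro a b hab
    rcases hab with h | h
    · rw [hT]; simp only []
      rw [adf_iterate_eventually e hy h, mul_zero, zero_mul, Finsupp.single_zero]
    · rw [hT]; simp only []
      rw [adf_iterate_eventually e hz h, mul_zero, Finsupp.single_zero]
  -- Left-hand side
  have L1 := mul_single_single e mul hsingle k l x y 1 1 N hy
  simp only [one_smul, one_mul] at L1
  have hL : mul (mul (Finsupp.single k x) (Finsupp.single l y)) (Finsupp.single m z)
      = ∑ i ∈ Finset.range N, ∑ j ∈ Finset.range N, (bi u i * bi (u + v - i) j) • T i j := by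
    rw [L1, mul_sum_left mul hladd hradd]
    refine Finset.sum_congr rfl fun i hi => ?_
    have hzz : Finsupp.single m z = Finsupp.single m ((1 : F) • z) := by rw [one_smul]
    rw [hzz,
      mul_single_single e mul hsingle (k + l - 2 * (i : ℤ)) m (x * (adf e)^[i] y) z (bi u i) 1 N hz]
    refine Finset.sum_congr rfl fun j hj => ?_
    have hc : (((k + l - 2 * (i : ℤ)) : ℤ) : F) / 2 = u + v - i := by
      rw [hu, hv]; push_cast; ring
    rw [hc, mul_one]
    simp only [hT, hd]
    rw [Finsupp.smul_single]
    congr 1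
    ring
  -- Right-hand side
  have R1 := mul_single_single e mul hsingle l m y z 1 1 N hz
  simp only [one_smul, one_mul] at R1
  have hR : mul (Finsupp.single k x) (mul (Finsupp.single l y) (Finsupp.single m z))
      = ∑ j ∈ Finset.range N, ∑ i ∈ Finset.range (2 * N), ∑ s ∈ Finset.range (i + 1),
          (bi u i * ((i.choose s : ℕ) : F) * bi v j) • T s ((i - s) + j) := by
    rw [R1, mul_sum_right mul hladd hradd]
    refine Finset.sum_congr rfl fun j hj => ?_
    have hxx : (Finsupp.single k x : ℤ →₀ H) = Finsupp.single k ((1 : F) • x) := by rw [one_smul]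
    rw [hxx,
      mul_single_single e mul hsingle k (l + m - 2 * (j : ℤ)) x (y * (adf e)^[j] z) 1 (bi v j)
        (2 * N) (adf_iterate_mul_zero e hy hz j le_rfl)]
    refine Finset.sum_congr rfl fun i hi => ?_
    -- expand the iterated derivation of the product by Leibniz
    rw [adf_leibniz]
    have hinner : ∀ s' : ℕ, (i.choose s') • ((adf e)^[s'] y * (adf e)^[i - s'] ((adf e)^[j] z))
        = ((i.choose s' : ℕ) : F) • ((adf e)^[s'] y * (adf e)^[(i - s') + j] z) := by
      intro s'
      rw [← Function.iterate_add_apply, Nat.cast_smul_eq_nsmul]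
    simp only [hinner]
    rw [Finset.mul_sum, Finset.smul_sum, single_sum']
    refine Finset.sum_congr rfl fun s' hs' => ?_
    rw [mul_smul_comm, smul_smul]
    simp only [hT, hd]
    rw [Finsupp.smul_single]
    congr 1
    · have : s' ≤ i := by have := Finset.mem_range.mp hs'; omega
      push_cast [Nat.cast_sub this]
      ring
    · congr 1
      · ring
      · rw [mul_assoc]
  -- put both sides together
  rw [hL, hR]
  have hLS : (∑ i ∈ Finset.range N, ∑ j ∈ Finset.range N, (bi u i * bi (u + v - i) j) • T i j)
      = ∑ i ∈ Finset.range N, ∑ j ∈ Finset.range N, ∑ r ∈ Finset.range (j + 1),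
          (bi u (i + r) * (((i + r).choose i : ℕ) : F) * bi v (j - r)) • T i j := by
    refine Finset.sum_congr rfl fun i _ => Finset.sum_congr rfl fun j _ => ?_
    rw [bi_key u v i j, Finset.sum_smul]
  rw [hLS]
  -- sigma rewriting
  set G₁ : (Σ _ : ℕ × ℕ, ℕ) → (ℤ →₀ H) := fun q =>
    (bi u (q.1.1 + q.2) * (((q.1.1 + q.2).choose q.1.1 : ℕ) : F) * bi v (q.1.2 - q.2)) •
      T q.1.1 q.1.2 with hG₁
  set G₂ : (Σ _ : ℕ × ℕ, ℕ) → (ℤ →₀ H) := fun q =>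
    (bi u q.1.2 * ((q.1.2.choose q.2 : ℕ) : F) * bi v q.1.1) •
      T q.2 ((q.1.2 - q.2) + q.1.1) with hG₂
  set σ₁ : Finset (Σ _ : ℕ × ℕ, ℕ) :=
    (Finset.range N ×ˢ Finset.range N).sigma (fun p => Finset.range (p.2 + 1)) with hσ₁
  set σ₂ : Finset (Σ _ : ℕ × ℕ, ℕ) :=
    (Finset.range N ×ˢ Finset.range (2 * N)).sigma (fun p => Finset.range (p.2 + 1)) with hσ₂
  have e1 : (∑ i ∈ Finset.range N, ∑ j ∈ Finset.range N, ∑ r ∈ Finset.range (j + 1),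
          (bi u (i + r) * (((i + r).choose i : ℕ) : F) * bi v (j - r)) • T i j)
      = ∑ q ∈ σ₁, G₁ q := by
    rw [hσ₁, Finset.sum_sigma, Finset.sum_product]
  have e2 : (∑ j ∈ Finset.range N, ∑ i ∈ Finset.range (2 * N), ∑ s ∈ Finset.range (i + 1),
          (bi u i * ((i.choose s : ℕ) : F) * bi v j) • T s ((i - s) + j))
      = ∑ q ∈ σ₂, G₂ q := by
    rw [hσ₂, Finset.sum_sigma, Finset.sum_product]
  rw [e1, e2]
  -- discard vanishing terms on the right
  have e3 : (∑ q ∈ σ₂.filter (fun q => q.2 < N ∧ (q.1.2 - q.2) + q.1.1 < N), G₂ q)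
      = ∑ q ∈ σ₂, G₂ q := by
    apply Finset.sum_filter_of_ne
    intro q hq hne
    by_cases h1 : q.2 < N
    · by_cases h2 : (q.1.2 - q.2) + q.1.1 < N
      · exact ⟨h1, h2⟩
      · exfalso; apply hne
        rw [hG₂]; simp only []
        rw [hT0 _ _ (Or.inr (by omega)), smul_zero]
    · exfalso; apply hne
      rw [hG₂]; simp only []
      rw [hT0 _ _ (Or.inl (by omega)), smul_zero]
  rw [← e3]
  -- the bijection
  refine Finset.sum_bij' (fun q _ => (⟨(q.1.2 - q.2, q.1.1 + q.2), q.1.1⟩ : Σ _ : ℕ × ℕ, ℕ))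
    (fun q _ => (⟨(q.2, (q.1.2 - q.2) + q.1.1), q.1.2 - q.2⟩ : Σ _ : ℕ × ℕ, ℕ))
    ?_ ?_ ?_ ?_ ?_
  · rintro ⟨⟨i, j⟩, r⟩ hq
    simp only [hσ₁, hσ₂, Finset.mem_sigma, Finset.mem_product, Finset.mem_range,
      Finset.mem_filter] at hq ⊢
    omega
  · rintro ⟨⟨j, i⟩, s⟩ hq
    simp only [hσ₁, hσ₂, Finset.mem_sigma, Finset.mem_product, Finset.mem_range,
      Finset.mem_filter] at hq ⊢
    omega
  · rintro ⟨⟨i, j⟩, r⟩ hq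
    simp only [hσ₁, Finset.mem_sigma, Finset.mem_product, Finset.mem_range] at hq
    have h1 : i + r - i = r := by omega
    have h2 : r + (j - r) = j := by omega
    simp only [h1, h2]
  · rintro ⟨⟨j, i⟩, s⟩ hq
    simp only [hσ₂, Finset.mem_sigma, Finset.mem_product, Finset.mem_range,
      Finset.mem_filter] at hq
    have h1 : (i - s) + j - (i - s) = j := by omega
    have h2 : s + (i - s) = i := by omega
    simp only [h1, h2]
  · rintro ⟨⟨i, j⟩, r⟩ hq
    simp only [hσ₁, Finset.mem_sigma, Finset.mem_product, Finset.mem_range] at hq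
    rw [hG₁, hG₂]
    simp only []
    have h1 : i + r - i = r := by omega
    have h2 : r + (j - r) = j := by omega
    simp only [h1, h2]
end
end MAIN

/-- Let `H` be an associative unital algebra over a field of characteristic 0 and
`e ∈ H` with `ad e` locally nilpotent.  On the direct sum `⊕_{n ∈ (1/2)ℤ} H·tⁿ`
(realized as `ℤ →₀ H`, where index `k` stands for `t^(k/2)`), the multiplication
`(x tⁿ)(y tᵐ) = Σ_{i≥0} binom(n,i)·x·(ad e)ⁱ(y)·t^(n+m−i)` (a finite sum by local
nilpotency) is associative.  Here `binom(n,i) = n(n−1)⋯(n−i+1)/i!`. -/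
theorem stmt7 {F H : Type*} [Field F] [CharZero F] [Ring H] [Algebra F H]
    (e : H)
    (hln : ∀ y : H, ∃ N : ℕ, (fun y => e * y - y * e)^[N] y = 0)
    (mul : (ℤ →₀ H) → (ℤ →₀ H) → (ℤ →₀ H))
    (hladd : ∀ a b c, mul (a + b) c = mul a c + mul b c)
    (hradd : ∀ a b c, mul a (b + c) = mul a b + mul a c)
    (hsingle : ∀ (k l : ℤ) (x y : H),
      mul (Finsupp.single k x) (Finsupp.single l y) =
        ∑ᶠ i : ℕ, Finsupp.single (k + l - 2 * (i : ℤ))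
          (((∏ j ∈ Finset.range i, ((k : F) / 2 - (j : F))) / (Nat.factorial i : F)) •
            (x * (fun y => e * y - y * e)^[i] y))) :
    ∀ a b c, mul (mul a b) c = mul a (mul b c) := by
  have hadf : ∀ y : H, ∃ N : ℕ, (adf e)^[N] y = 0 := hln
  intro a b c
  induction a using Finsupp.induction with
  | zero =>
    rw [mul_zero_left mul hladd hradd, mul_zero_left mul hladd hradd,
      mul_zero_left mul hladd hradd]
  | single_add k x a _ _ IHa =>
    rw [hladd, hladd, hladd, IHa]
    congr 1
    clear IHa
    induction b using Finsupp.induction with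
    | zero =>
      rw [mul_zero_right mul hladd hradd, mul_zero_left mul hladd hradd,
        mul_zero_right mul hladd hradd]
    | single_add l y b _ _ IHb =>
      rw [hradd, hladd, hladd, hradd, IHb]
      congr 1
      clear IHb
      induction c using Finsupp.induction with
      | zero =>
        rw [mul_zero_right mul hladd hradd, mul_zero_right mul hladd hradd,
          mul_zero_right mul hladd hradd]
      | single_add m z cf _ _ IHc =>
        rw [hradd, hradd, hradd, IHc]
        congr 1
        obtain ⟨N1, hN1⟩ := hadf y
        obtain ⟨N2, hN2⟩ := hadf z
        exact assoc_single e mul hladd hradd hsingle k l m x y z (max N1 N2)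
          (adf_iterate_eventually e hN1 (le_max_left N1 N2))
          (adf_iterate_eventually e hN2 (le_max_right N1 N2))
end

section
/- Let Ĥ = (H, ad e, 1/2)^ be the algebra from the previous construction (direct sum of copies of H indexed by half-integers, with twisted multiplication (x t^n)(y t^m) = Σ_i binom(n,i) x (ad e)^i(y) t^{n+m−i}). Then the linear subspace I spanned by all elements of the form x t^{n+m} − x e^n t^m, for x ∈ H, n ∈ ℤ_{≥0}, m ∈ (1/2)ℤ, is a two-sided ideal of Ĥ. -/
set_option linter.unusedSectionVars false
set_option maxHeartbeats 1000000
open Finset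

section bcsec
variable {F : Type*} [Field F] [CharZero F]

private noncomputable def bc (r : F) (k : ℕ) : F :=
  (∏ j ∈ Finset.range k, (r - (j : F))) / (Nat.factorial k : F)

private lemma bc_def (r : F) (k : ℕ) :
    (∏ j ∈ Finset.range k, (r - (j : F))) / (Nat.factorial k : F) = bc r k := rfl

private lemma desc_prod (r : F) (k : ℕ) :
    (Polynomial.smeval (descPochhammer ℤ k) r) = ∏ j ∈ Finset.range k, (r - (j : F)) := by
  induction k with
  | zero => simp [descPochhammer_zero, Polynomial.smeval_one]
  | succ k ih =>
    rw [descPochhammer_succ_right, Polynomial.smeval_mul, ih, Finset.prod_range_succ,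
      Polynomial.smeval_sub, Polynomial.smeval_X, Polynomial.smeval_natCast]
    simp

private lemma bc_add (r s : F) (k : ℕ) :
    bc (r + s) k = ∑ ij ∈ Finset.HasAntidiagonal.antidiagonal k, bc r ij.1 * bc s ij.2 := by
  have h := Ring.descPochhammer_smeval_add (r := r) (s := s) k (Commute.all r s)
  simp only [bc, ← desc_prod]
  rw [h, Finset.sum_div]
  refine Finset.sum_congr rfl fun ij hij => ?_
  have hk : ij.1 + ij.2 = k := Finset.HasAntidiagonal.mem_antidiagonal.mp hij
  have key : (k.choose ij.1) * ij.1.factorial * ij.2.factorial = k.factorial := by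
    subst hk
    have := Nat.choose_mul_factorial_mul_factorial (Nat.le_add_right ij.1 ij.2)
    rwa [Nat.add_sub_cancel_left] at this
  have h1 : (ij.1.factorial : F) ≠ 0 := Nat.cast_ne_zero.mpr (Nat.factorial_ne_zero _)
  have h2 : (ij.2.factorial : F) ≠ 0 := Nat.cast_ne_zero.mpr (Nat.factorial_ne_zero _)
  have h3 : (k.factorial : F) ≠ 0 := Nat.cast_ne_zero.mpr (Nat.factorial_ne_zero _)
  field_simp
  rw [← key]
  push_cast
  ring

private lemma bc_natCast (n j : ℕ) : bc ((n : F)) j = (n.choose j : F) := by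
  by_cases h : j ≤ n
  · have hp : ∏ t ∈ Finset.range j, ((n : F) - (t : F)) = (n.descFactorial j : F) := by
      rw [Nat.descFactorial_eq_prod_range, Nat.cast_prod]
      refine Finset.prod_congr rfl fun t ht => ?_
      have : t ≤ n := le_trans (Nat.le_of_lt_succ (Nat.lt_succ_of_lt (Finset.mem_range.mp ht))) h
      rw [Nat.cast_sub this]
    rw [bc, hp, Nat.descFactorial_eq_factorial_mul_choose]
    have h3 : ((j.factorial : F)) ≠ 0 := Nat.cast_ne_zero.mpr (Nat.factorial_ne_zero _)
    push_cast
    rw [mul_comm, mul_div_assoc, div_self h3, mul_one]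
  · push_neg at h
    rw [bc, Finset.prod_eq_zero (Finset.mem_range.mpr h) (by simp), zero_div,
      Nat.choose_eq_zero_of_lt h, Nat.cast_zero]

end bcsec

section adsec
variable {F H : Type*} [Field F] [CharZero F] [Ring H] [Algebra F H] (e : H)

private lemma adE_zero_iter (i : ℕ) : (fun y => e * y - y * e)^[i] (0 : H) = 0 :=
  Function.iterate_fixed (by simp) i

private lemma adE_iter_mul_pow (i n : ℕ) (x : H) :
    (fun y => e * y - y * e)^[i] (x * e ^ n) = (fun y => e * y - y * e)^[i] x * e ^ n := by
  induction i with
  | zero => rfl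
  | succ i ih =>
    rw [Function.iterate_succ_apply', Function.iterate_succ_apply', ih]
    have hcomm : e ^ n * e = e * e ^ n := by rw [← pow_succ, ← pow_succ']
    set u := (fun y => e * y - y * e)^[i] x with hu
    show e * (u * e ^ n) - (u * e ^ n) * e = (e * u - u * e) * e ^ n
    rw [mul_assoc u, hcomm, ← mul_assoc u, ← mul_assoc e, ← sub_mul]

private lemma adE_iter_vanish {N : ℕ} {y : H} (hN : (fun y => e * y - y * e)^[N] y = 0)
    {i : ℕ} (hi : N ≤ i) : (fun y => e * y - y * e)^[i] y = 0 := by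
  obtain ⟨k, rfl⟩ := Nat.exists_eq_add_of_le hi
  rw [Nat.add_comm, Function.iterate_add_apply, hN, adE_zero_iter]

private lemma adE_iter_smul (i : ℕ) (c : F) (y : H) :
    (fun y => e * y - y * e)^[i] (c • y) = c • (fun y => e * y - y * e)^[i] y := by
  induction i with
  | zero => rfl
  | succ i ih =>
    rw [Function.iterate_succ_apply', Function.iterate_succ_apply', ih]
    show e * (c • _) - (c • _) * e = c • (e * _ - _ * e)
    rw [mul_smul_comm, smul_mul_assoc, smul_sub]

private lemma pow_mul_expand (n : ℕ) (y : H) :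
    e ^ n * y = ∑ j ∈ Finset.range (n + 1),
      n.choose j • ((fun y => e * y - y * e)^[j] y * e ^ (n - j)) := by
  induction n with
  | zero => simp
  | succ n ih =>
    have step : ∀ u : H, ∀ k : ℕ, e * (u * e ^ k) =
        (e * u - u * e) * e ^ k + u * e ^ (k + 1) := by
      intro u k
      rw [sub_mul, mul_assoc, pow_succ', ← mul_assoc, ← mul_assoc]
      simp only [mul_assoc, sub_add_cancel]
    rw [pow_succ', mul_assoc, ih, Finset.mul_sum]
    have lhs_eq : ∀ j ∈ Finset.range (n + 1),
        e * (n.choose j • ((fun y => e * y - y * e)^[j] y * e ^ (n - j))) =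
          n.choose j • ((fun y => e * y - y * e)^[j+1] y * e ^ (n - j))
          + n.choose j • ((fun y => e * y - y * e)^[j] y * e ^ (n + 1 - j)) := by
      intro j hj
      rw [mul_smul_comm, step, smul_add, Function.iterate_succ_apply']
      have : n - j + 1 = n + 1 - j := by
        have := Nat.lt_succ_iff.mp (Finset.mem_range.mp hj); omega
      rw [this]
    rw [Finset.sum_congr rfl lhs_eq, Finset.sum_add_distrib]
    rw [Finset.sum_range_succ' (fun j => (n+1).choose j • ((fun y => e * y - y * e)^[j] y * e ^ (n + 1 - j))) (n+1)]
    have split : ∀ j ∈ Finset.range (n + 1),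
        (n+1).choose (j+1) • ((fun y => e * y - y * e)^[j+1] y * e ^ (n + 1 - (j+1)))
        = n.choose j • ((fun y => e * y - y * e)^[j+1] y * e ^ (n - j))
          + n.choose (j+1) • ((fun y => e * y - y * e)^[j+1] y * e ^ (n - j)) := by
      intro j hj
      rw [Nat.choose_succ_succ, add_smul, Nat.succ_sub_succ]
    rw [Finset.sum_congr rfl split, Finset.sum_add_distrib]
    have last : ∑ j ∈ Finset.range (n + 1),
        n.choose (j+1) • ((fun y => e * y - y * e)^[j+1] y * e ^ (n - j))
        + (n+1).choose 0 • ((fun y => e * y - y * e)^[0] y * e ^ (n + 1 - 0))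
        = ∑ j ∈ Finset.range (n + 1),
        n.choose j • ((fun y => e * y - y * e)^[j] y * e ^ (n + 1 - j)) := by
      have c1 : ∑ j ∈ Finset.range (n + 1),
          n.choose (j+1) • ((fun y => e * y - y * e)^[j+1] y * e ^ (n - j))
          = ∑ j ∈ Finset.range (n + 1),
          (fun j => n.choose j • ((fun y => e * y - y * e)^[j] y * e ^ (n + 1 - j))) (j+1) := by
        refine Finset.sum_congr rfl fun j hj => ?_
        simp only [Nat.succ_sub_succ]
      rw [c1]
      have c2 : (n+1).choose 0 • ((fun y => e * y - y * e)^[0] y * e ^ (n + 1 - 0))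
          = (fun j => n.choose j • ((fun y => e * y - y * e)^[j] y * e ^ (n + 1 - j))) 0 := by
        simp
      rw [c2, ← Finset.sum_range_succ'
        (fun j => n.choose j • ((fun y => e * y - y * e)^[j] y * e ^ (n + 1 - j))) (n+1),
        Finset.sum_range_succ]
      simp
    rw [add_assoc, last]

private lemma mulss {mul : (ℤ →₀ H) → (ℤ →₀ H) → (ℤ →₀ H)}
    (hsingle : ∀ (k l : ℤ) (x y : H),
      mul (Finsupp.single k x) (Finsupp.single l y) =
        ∑ᶠ i : ℕ, Finsupp.single (k + l - 2 * (i : ℤ))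
          (((∏ j ∈ Finset.range i, ((k : F) / 2 - (j : F))) / (Nat.factorial i : F)) •
            (x * (fun y => e * y - y * e)^[i] y)))
    (k l : ℤ) (x : H) {y : H} {N : ℕ} (hN : (fun y => e * y - y * e)^[N] y = 0) :
    mul (Finsupp.single k x) (Finsupp.single l y) =
      ∑ i ∈ Finset.range N, Finsupp.single (k + l - 2 * (i : ℤ))
        (bc ((k : F) / 2) i • (x * (fun y => e * y - y * e)^[i] y)) := by
  rw [hsingle]
  simp only [bc_def]
  refine finsum_eq_sum_of_support_subset _ fun i hi => ?_
  rw [Function.mem_support] at hi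
  by_contra hmem
  have hNi : N ≤ i := by
    rcases Nat.lt_or_ge i N with h | h
    · exact absurd (Finset.mem_coe.mpr (Finset.mem_range.mpr h)) hmem
    · exact h
  exact hi (by simp [adE_iter_vanish e hN hNi])

end adsec

/-- With `Ĥ = (H, ad e, 1/2)^` as before (realized as `ℤ →₀ H`, index `k` standing
for `t^(k/2)`, with the twisted multiplication), the linear span `I` of the elements
`x t^(n+m) − x eⁿ tᵐ` (`x ∈ H`, `n ∈ ℤ_{≥0}`, `m ∈ (1/2)ℤ`) is a two-sided ideal. -/
theorem stmt8 {F H : Type*} [Field F] [CharZero F] [Ring H] [Algebra F H]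
    (e : H)
    (hln : ∀ y : H, ∃ N : ℕ, (fun y => e * y - y * e)^[N] y = 0)
    (mul : (ℤ →₀ H) → (ℤ →₀ H) → (ℤ →₀ H))
    (hladd : ∀ a b c, mul (a + b) c = mul a c + mul b c)
    (hradd : ∀ a b c, mul a (b + c) = mul a b + mul a c)
    (hsingle : ∀ (k l : ℤ) (x y : H),
      mul (Finsupp.single k x) (Finsupp.single l y) =
        ∑ᶠ i : ℕ, Finsupp.single (k + l - 2 * (i : ℤ))
          (((∏ j ∈ Finset.range i, ((k : F) / 2 - (j : F))) / (Nat.factorial i : F)) •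
            (x * (fun y => e * y - y * e)^[i] y)))
    (I : Submodule F (ℤ →₀ H))
    (hI : I = Submodule.span F
      {a | ∃ (x : H) (n : ℕ) (m : ℤ),
        a = Finsupp.single (2 * (n : ℤ) + m) x - Finsupp.single m (x * e ^ n)}) :
    ∀ a ∈ I, ∀ b, mul a b ∈ I ∧ mul b a ∈ I := by
  subst hI
  set S : Set (ℤ →₀ H) := {a | ∃ (x : H) (n : ℕ) (m : ℤ),
    a = Finsupp.single (2 * (n : ℤ) + m) x - Finsupp.single m (x * e ^ n)} with hS
  have hgen : ∀ (x : H) (n : ℕ) (m : ℤ),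
      Finsupp.single (2 * (n : ℤ) + m) x - Finsupp.single m (x * e ^ n)
        ∈ Submodule.span F S :=
    fun x n m => Submodule.subset_span ⟨x, n, m, rfl⟩
  -- basic additive facts
  have mul0l : ∀ b, mul 0 b = 0 := by
    intro b
    have h := hladd 0 0 b
    rw [add_zero] at h
    exact add_eq_right.mp h.symm
  have mul0r : ∀ b, mul b 0 = 0 := by
    intro b
    have h := hradd b 0 0
    rw [add_zero] at h
    exact add_eq_right.mp h.symm
  have msubl : ∀ u v c, mul (u - v) c = mul u c - mul v c := by
    intro u v c
    have h := hladd (u - v) v c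
    rw [sub_add_cancel] at h
    exact eq_sub_of_add_eq h.symm
  have msubr : ∀ c u v, mul c (u - v) = mul c u - mul c v := by
    intro c u v
    have h := hradd c (u - v) v
    rw [sub_add_cancel] at h
    exact eq_sub_of_add_eq h.symm
  -- scalar multiplication
  have msmul_ss : ∀ (c : F) (k l : ℤ) (x y : H),
      mul (Finsupp.single k (c • x)) (Finsupp.single l y)
        = c • mul (Finsupp.single k x) (Finsupp.single l y) := by
    intro c k l x y
    obtain ⟨N, hN⟩ := hln y
    rw [mulss e hsingle k l (c • x) hN, mulss e hsingle k l x hN, Finset.smul_sum]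
    refine Finset.sum_congr rfl fun i _ => ?_
    rw [smul_mul_assoc, smul_comm, Finsupp.smul_single]
  have msmul_ss_r : ∀ (c : F) (k l : ℤ) (x y : H),
      mul (Finsupp.single k x) (Finsupp.single l (c • y))
        = c • mul (Finsupp.single k x) (Finsupp.single l y) := by
    intro c k l x y
    obtain ⟨N, hN⟩ := hln y
    have hN' : (fun y => e * y - y * e)^[N] (c • y) = 0 := by
      rw [adE_iter_smul, hN, smul_zero]
    rw [mulss e hsingle k l x hN', mulss e hsingle k l x hN, Finset.smul_sum]
    refine Finset.sum_congr rfl fun i _ => ?_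
    rw [adE_iter_smul, mul_smul_comm, smul_comm, Finsupp.smul_single]
  have msmul_s : ∀ (c : F) (k : ℤ) (x : H) (b),
      mul (Finsupp.single k (c • x)) b = c • mul (Finsupp.single k x) b := by
    intro c k x b
    induction b using Finsupp.induction with
    | zero => rw [mul0r, mul0r, smul_zero]
    | single_add l y g hl hy ih => rw [hradd, hradd, msmul_ss, ih, smul_add]
  have msmul_sr : ∀ (c : F) (l : ℤ) (y : H) (b),
      mul b (Finsupp.single l (c • y)) = c • mul b (Finsupp.single l y) := by
    intro c l y b
    induction b using Finsupp.induction with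
    | zero => rw [mul0l, mul0l, smul_zero]
    | single_add k x g hk hx ih => rw [hladd, hladd, msmul_ss_r, ih, smul_add]
  have msmul_l : ∀ (c : F) (a b), mul (c • a) b = c • mul a b := by
    intro c a b
    induction a using Finsupp.induction with
    | zero => rw [smul_zero, mul0l, smul_zero]
    | single_add k x g hk hx ih =>
      rw [smul_add, Finsupp.smul_single, hladd, hladd, msmul_s, ih, smul_add]
  have msmul_r : ∀ (c : F) (a b), mul b (c • a) = c • mul b a := by
    intro c a b
    induction a using Finsupp.induction with
    | zero => rw [smul_zero, mul0r, smul_zero]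
    | single_add l y g hl hy ih =>
      rw [smul_add, Finsupp.smul_single, hradd, hradd, msmul_sr, ih, smul_add]
  -- key single-generator memberships
  have keyR : ∀ (l : ℤ) (y x : H) (n : ℕ) (m : ℤ),
      mul (Finsupp.single l y)
        (Finsupp.single (2 * (n : ℤ) + m) x - Finsupp.single m (x * e ^ n))
        ∈ Submodule.span F S := by
    intro l y x n m
    rw [msubr]
    obtain ⟨N, hNx⟩ := hln x
    have hNxe : (fun y => e * y - y * e)^[N] (x * e ^ n) = 0 := by
      rw [adE_iter_mul_pow, hNx, zero_mul]
    rw [mulss e hsingle l (2*(n:ℤ)+m) y hNx, mulss e hsingle l m y hNxe,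
      ← Finset.sum_sub_distrib]
    refine Submodule.sum_mem _ fun i _ => ?_
    have hmem := Submodule.smul_mem _ (bc ((l:F)/2) i)
      (hgen (y * (fun y => e * y - y * e)^[i] x) n (l + m - 2*(i:ℤ)))
    rw [smul_sub, Finsupp.smul_single, Finsupp.smul_single] at hmem
    have hidx : (2*(n:ℤ) + (l + m - 2*(i:ℤ))) = l + (2*(n:ℤ)+m) - 2*(i:ℤ) := by ring
    rw [hidx] at hmem
    rw [adE_iter_mul_pow, ← mul_assoc]
    exact hmem
  have keyL : ∀ (l : ℤ) (y x : H) (n : ℕ) (m : ℤ),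
      mul (Finsupp.single (2 * (n : ℤ) + m) x - Finsupp.single m (x * e ^ n))
        (Finsupp.single l y)
        ∈ Submodule.span F S := by
    intro l y x n m
    rw [msubl]
    obtain ⟨N, hNy⟩ := hln y
    set M := N + n + 1 with hM
    have h2M : (fun y => e * y - y * e)^[2*M] y = 0 := adE_iter_vanish e hNy (by omega)
    rw [mulss e hsingle (2*(n:ℤ)+m) l x h2M, mulss e hsingle m l (x * e^n) h2M]
    have hwvan : ∀ s : ℕ, N ≤ s →
        Finsupp.single (2*(n:ℤ) + m + l - 2*((s:ℕ):ℤ)) (x * (fun y => e * y - y * e)^[s] y)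
          = (0 : ℤ →₀ H) := by
      intro s hs
      rw [adE_iter_vanish e hNy hs, mul_zero, Finsupp.single_zero]
    have hA : ∑ i ∈ Finset.range (2*M),
        Finsupp.single ((2*(n:ℤ)+m) + l - 2*(i:ℤ))
          (bc (((2*(n:ℤ)+m : ℤ) : F) / 2) i • (x * (fun y => e * y - y * e)^[i] y))
        = ∑ i ∈ Finset.range (2*M), ∑ j ∈ Finset.range (n+1),
            (bc ((m:F)/2) i * bc ((n:F)) j) •
              Finsupp.single (2*(n:ℤ) + m + l - 2*(((i+j : ℕ)):ℤ))
                (x * (fun y => e * y - y * e)^[i+j] y) := by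
      have e1 : ∀ i : ℕ, Finsupp.single ((2*(n:ℤ)+m) + l - 2*(i:ℤ))
          (bc (((2*(n:ℤ)+m : ℤ) : F) / 2) i • (x * (fun y => e * y - y * e)^[i] y))
          = bc ((m:F)/2 + (n:F)) i •
              Finsupp.single (2*(n:ℤ) + m + l - 2*(i:ℤ))
                (x * (fun y => e * y - y * e)^[i] y) := by
        intro i
        have hcast : ((2*(n:ℤ)+m : ℤ) : F) / 2 = (m:F)/2 + (n:F) := by push_cast; ring
        rw [hcast, Finsupp.smul_single]
      rw [Finset.sum_congr rfl (fun i _ => e1 i)]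
      have e2 : ∀ s ∈ Finset.range (2*M), bc ((m:F)/2 + (n:F)) s •
          Finsupp.single (2*(n:ℤ) + m + l - 2*(s:ℤ))
            (x * (fun y => e * y - y * e)^[s] y)
          = ∑ ij ∈ Finset.HasAntidiagonal.antidiagonal s, (bc ((m:F)/2) ij.1 * bc ((n:F)) ij.2) •
              Finsupp.single (2*(n:ℤ) + m + l - 2*(((ij.1+ij.2 : ℕ)):ℤ))
                (x * (fun y => e * y - y * e)^[ij.1+ij.2] y) := by
        intro s _
        rw [bc_add, Finset.sum_smul]
        refine Finset.sum_congr rfl fun ij hij => ?_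
        rw [Finset.HasAntidiagonal.mem_antidiagonal.mp hij]
      rw [Finset.sum_congr rfl e2]
      have hdisj : (↑(Finset.range (2*M)) : Set ℕ).PairwiseDisjoint Finset.HasAntidiagonal.antidiagonal := by
        intro s _ t _ hst
        refine Finset.disjoint_left.mpr fun p hps hpt => hst ?_
        rw [← Finset.HasAntidiagonal.mem_antidiagonal.mp hps, ← Finset.HasAntidiagonal.mem_antidiagonal.mp hpt]
      rw [← Finset.sum_biUnion hdisj]
      have hsub : (Finset.range (2*M)).biUnion Finset.HasAntidiagonal.antidiagonal
          ⊆ Finset.range (2*M) ×ˢ Finset.range (2*M) := by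
        intro p hp
        simp only [Finset.mem_biUnion] at hp
        obtain ⟨s, hs, hps⟩ := hp
        have h1 := Finset.HasAntidiagonal.mem_antidiagonal.mp hps
        have hs' := Finset.mem_range.mp hs
        exact Finset.mem_product.mpr
          ⟨Finset.mem_range.mpr (by omega), Finset.mem_range.mpr (by omega)⟩
      rw [Finset.sum_subset hsub (fun p hp hnp => ?vanish)]
      case vanish =>
        have hge : N ≤ p.1 + p.2 := by
          by_contra hlt
          push_neg at hlt
          exact hnp (Finset.mem_biUnion.mpr ⟨p.1 + p.2, Finset.mem_range.mpr (by omega),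
            Finset.HasAntidiagonal.mem_antidiagonal.mpr rfl⟩)
        rw [hwvan _ hge, smul_zero]
      rw [Finset.sum_product]
      refine Finset.sum_congr rfl fun i _ => ?_
      refine (Finset.sum_subset (Finset.range_subset_range.mpr (by omega)) ?_).symm
      intro j hj hnj
      have hjn : n < j := by
        simp only [Finset.mem_range, not_lt] at hnj hj
        omega
      rw [bc_natCast, Nat.choose_eq_zero_of_lt hjn, Nat.cast_zero, mul_zero, zero_smul]
    have hB : ∑ i ∈ Finset.range (2*M),
        Finsupp.single (m + l - 2*(i:ℤ))
          (bc ((m : F) / 2) i • ((x * e^n) * (fun y => e * y - y * e)^[i] y))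
        = ∑ i ∈ Finset.range (2*M), ∑ j ∈ Finset.range (n+1),
            Finsupp.single (m + l - 2*(i:ℤ))
              ((bc ((m:F)/2) i * bc ((n:F)) j) •
                ((x * (fun y => e * y - y * e)^[i+j] y) * e^(n-j))) := by
      refine Finset.sum_congr rfl fun i _ => ?_
      rw [mul_assoc, pow_mul_expand e n ((fun y => e * y - y * e)^[i] y),
        Finset.mul_sum, Finset.smul_sum]
      rw [← Finsupp.singleAddHom_apply, map_sum]
      refine Finset.sum_congr rfl fun j hj => ?_
      rw [Finsupp.singleAddHom_apply]
      congr 1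
      have hit : (fun y => e * y - y * e)^[j] ((fun y => e * y - y * e)^[i] y)
          = (fun y => e * y - y * e)^[i+j] y := by
        rw [Nat.add_comm, Function.iterate_add_apply]
      rw [hit, mul_smul_comm, ← Nat.cast_smul_eq_nsmul F, smul_smul, ← mul_assoc,
        bc_natCast]
    rw [hA, hB, ← Finset.sum_sub_distrib]
    refine Submodule.sum_mem _ fun i hi => ?_
    rw [← Finset.sum_sub_distrib]
    refine Submodule.sum_mem _ fun j hj => ?_
    have hjn : j ≤ n := Nat.lt_succ_iff.mp (Finset.mem_range.mp hj)
    have hmem := Submodule.smul_mem _ (bc ((m:F)/2) i * bc ((n:F)) j)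
      (hgen (x * (fun y => e * y - y * e)^[i+j] y) (n - j) (m + l - 2*(i:ℤ)))
    rw [smul_sub, Finsupp.smul_single, Finsupp.smul_single] at hmem
    have hidx : (2*((n-j : ℕ) : ℤ) + (m + l - 2*(i:ℤ)))
        = 2*(n:ℤ) + m + l - 2*((i+j : ℕ) : ℤ) := by
      push_cast [Nat.cast_sub hjn]
      ring
    rw [hidx] at hmem
    rw [Finsupp.smul_single]
    exact hmem
  -- generators against arbitrary b
  have keyGenR : ∀ (x : H) (n : ℕ) (m : ℤ) (b),
      mul b (Finsupp.single (2 * (n : ℤ) + m) x - Finsupp.single m (x * e ^ n))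
        ∈ Submodule.span F S := by
    intro x n m b
    induction b using Finsupp.induction with
    | zero => rw [mul0l]; exact Submodule.zero_mem _
    | single_add l y g hl hy ih => rw [hladd]; exact Submodule.add_mem _ (keyR l y x n m) ih
  have keyGenL : ∀ (x : H) (n : ℕ) (m : ℤ) (b),
      mul (Finsupp.single (2 * (n : ℤ) + m) x - Finsupp.single m (x * e ^ n)) b
        ∈ Submodule.span F S := by
    intro x n m b
    induction b using Finsupp.induction with
    | zero => rw [mul0r]; exact Submodule.zero_mem _
    | single_add l y g hl hy ih => rw [hradd]; exact Submodule.add_mem _ (keyL l y x n m) ih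
  -- conclude by span induction
  intro a ha b
  induction ha using Submodule.span_induction with
  | mem u hu =>
    obtain ⟨x, n, m, rfl⟩ := hu
    exact ⟨keyGenL x n m b, keyGenR x n m b⟩
  | zero => exact ⟨by rw [mul0l]; exact Submodule.zero_mem _,
      by rw [mul0r]; exact Submodule.zero_mem _⟩
  | add u v hu hv ihu ihv =>
    exact ⟨by rw [hladd]; exact Submodule.add_mem _ ihu.1 ihv.1,
      by rw [hradd]; exact Submodule.add_mem _ ihu.2 ihv.2⟩
  | smul c u hu ihu =>
    exact ⟨by rw [msmul_l]; exact Submodule.smul_mem _ _ ihu.1,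
      by rw [msmul_r]; exact Submodule.smul_mem _ _ ihu.2⟩
end

section
/- With Ĥ and I as above, the ideal I is generated as a two-sided ideal of Ĥ by the single element e·t^0 − 1·t^1 (i.e. 'e − t'). -/
/-- With `Ĥ` and `I` as before, `I` is generated as a two-sided ideal of `Ĥ` by the
single element `e·t⁰ − 1·t¹` (i.e. `e − t`): it contains this element, and it is
contained in every subspace containing this element that is closed under left and
right multiplication. -/
theorem stmt9 {F H : Type*} [Field F] [CharZero F] [Ring H] [Algebra F H]
    (e : H)
    (hln : ∀ y : H, ∃ N : ℕ, (fun y => e * y - y * e)^[N] y = 0)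
    (mul : (ℤ →₀ H) → (ℤ →₀ H) → (ℤ →₀ H))
    (hladd : ∀ a b c, mul (a + b) c = mul a c + mul b c)
    (hradd : ∀ a b c, mul a (b + c) = mul a b + mul a c)
    (hsingle : ∀ (k l : ℤ) (x y : H),
      mul (Finsupp.single k x) (Finsupp.single l y) =
        ∑ᶠ i : ℕ, Finsupp.single (k + l - 2 * (i : ℤ))
          (((∏ j ∈ Finset.range i, ((k : F) / 2 - (j : F))) / (Nat.factorial i : F)) •
            (x * (fun y => e * y - y * e)^[i] y)))
    (I : Submodule F (ℤ →₀ H))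
    (hI : I = Submodule.span F
      {a | ∃ (x : H) (n : ℕ) (m : ℤ),
        a = Finsupp.single (2 * (n : ℤ) + m) x - Finsupp.single m (x * e ^ n)}) :
    (Finsupp.single (0 : ℤ) e - Finsupp.single (2 : ℤ) (1 : H)) ∈ I ∧
    ∀ J : Submodule F (ℤ →₀ H),
      (Finsupp.single (0 : ℤ) e - Finsupp.single (2 : ℤ) (1 : H)) ∈ J →
      (∀ a ∈ J, ∀ b, mul a b ∈ J ∧ mul b a ∈ J) →
      I ≤ J := by
  subst hI
  set f : H → H := fun y => e * y - y * e with hf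
  have hf0 : f 0 = 0 := by simp [hf]
  have hfe : ∀ i : ℕ, i ≠ 0 → f^[i] e = 0 := by
    intro i hi
    obtain ⟨k, rfl⟩ := Nat.exists_eq_succ_of_ne_zero hi
    rw [Function.iterate_succ_apply]
    have : f e = 0 := by simp [hf]
    rw [this, Function.iterate_fixed hf0]
  have hf1 : ∀ i : ℕ, i ≠ 0 → f^[i] (1 : H) = 0 := by
    intro i hi
    obtain ⟨k, rfl⟩ := Nat.exists_eq_succ_of_ne_zero hi
    rw [Function.iterate_succ_apply]
    have : f (1 : H) = 0 := by simp [hf]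
    rw [this, Function.iterate_fixed hf0]
  constructor
  · have h1 : (Finsupp.single (2 * ((1 : ℕ) : ℤ) + 0) (1 : H)
        - Finsupp.single (0 : ℤ) ((1 : H) * e ^ 1)) ∈
        Submodule.span F {a : ℤ →₀ H | ∃ (x : H) (n : ℕ) (m : ℤ),
          a = Finsupp.single (2 * (n : ℤ) + m) x - Finsupp.single m (x * e ^ n)} :=
      Submodule.subset_span ⟨1, 1, 0, rfl⟩
    have h2 := Submodule.neg_mem _ h1
    simpa using h2
  · intro J hEJ hclosed
    have mul_sub : ∀ a b c, mul a (b - c) = mul a b - mul a c := by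
      intro a b c
      have h := hradd a (b - c) c
      rw [sub_add_cancel] at h
      exact eq_sub_of_add_eq h.symm
    -- key computation
    have key : ∀ (y : H) (m : ℤ),
        mul (Finsupp.single m y) (Finsupp.single (0 : ℤ) e - Finsupp.single (2 : ℤ) (1 : H))
          = Finsupp.single m (y * e) - Finsupp.single (m + 2) y := by
      intro y m
      rw [mul_sub, hsingle, hsingle]
      have e1 : (∑ᶠ i : ℕ, Finsupp.single (m + 0 - 2 * (i : ℤ))
          (((∏ j ∈ Finset.range i, ((m : F) / 2 - (j : F))) / (Nat.factorial i : F)) •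
            (y * f^[i] e))) = Finsupp.single m (y * e) := by
        rw [finsum_eq_single _ 0 (by
          intro i hi
          rw [hfe i hi]
          simp)]
        simp
      have e2 : (∑ᶠ i : ℕ, Finsupp.single (m + 2 - 2 * (i : ℤ))
          (((∏ j ∈ Finset.range i, ((m : F) / 2 - (j : F))) / (Nat.factorial i : F)) •
            (y * f^[i] (1 : H)))) = Finsupp.single (m + 2) y := by
        rw [finsum_eq_single _ 0 (by
          intro i hi
          rw [hf1 i hi]
          simp)]
        simp
      rw [e1, e2]
    have gen : ∀ (n : ℕ) (x : H) (m : ℤ),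
        (Finsupp.single (2 * (n : ℤ) + m) x - Finsupp.single m (x * e ^ n)) ∈ J := by
      intro n
      induction n with
      | zero => intro x m; simp
      | succ n ih =>
        intro x m
        have h1 := ih x (m + 2)
        have h2 : mul (Finsupp.single m (x * e ^ n))
            (Finsupp.single (0 : ℤ) e - Finsupp.single (2 : ℤ) (1 : H)) ∈ J :=
          (hclosed _ hEJ _).2
        rw [key] at h2
        have h3 := J.sub_mem h1 h2
        have heq : (Finsupp.single (2 * (n : ℤ) + (m + 2)) x
              - Finsupp.single (m + 2) (x * e ^ n))
            - (Finsupp.single m (x * e ^ n * e) - Finsupp.single (m + 2) (x * e ^ n))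
            = Finsupp.single (2 * (((n + 1 : ℕ)) : ℤ) + m) x
              - Finsupp.single m (x * e ^ (n + 1)) := by
          rw [pow_succ, ← mul_assoc]
          have : (2 * (n : ℤ) + (m + 2)) = 2 * (((n + 1 : ℕ)) : ℤ) + m := by push_cast; ring
          rw [this]
          abel
        rw [heq] at h3
        exact h3
    rw [Submodule.span_le]
    rintro a ⟨x, n, m, rfl⟩
    exact gen n x m
end

section
/- Let H, e, Ĥ, I be as above and set H[e^{−1/2}] := Ĥ/I with quotient map ev. Then: (a) every element of H[e^{−1/2}] can be written as ev(x₁ t^{−n} + x₂ t^{−n−1/2}) for some x₁, x₂ ∈ H and n ∈ ℤ; (b) for x₁, x₂, x₁', x₂' ∈ H and n ∈ ℤ, one has ev(x₁ t^{−n} + x₂ t^{−n−1/2}) = ev(x₁' t^{−n} + x₂' t^{−n−1/2}) if and only if there exists m ∈ ℤ_{≥0} with (x₁ − x₁')·e^m = 0 and (x₂ − x₂')·e^m = 0. -/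
section Aux

variable {F H : Type*} [Field F] [Ring H] [Algebra F H]

private def genSet (e : H) : Set (ℤ →₀ H) :=
  {a | ∃ (x : H) (n : ℕ) (m : ℤ),
    a = Finsupp.single (2 * (n : ℤ) + m) x - Finsupp.single m (x * e ^ n)}

private lemma shift_mem (e : H) (k : ℤ) (j : ℕ) (x : H) :
    Finsupp.single k x - Finsupp.single (k - 2 * j) (x * e ^ j)
      ∈ Submodule.span F (genSet e) :=
  Submodule.subset_span
    ⟨x, j, k - 2 * j, by rw [show 2 * (j : ℤ) + (k - 2 * j) = k by ring]⟩

private lemma single_mem_of_ann (e : H) (k : ℤ) (x : H) (m : ℕ) (hx : x * e ^ m = 0) :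
    Finsupp.single k x ∈ Submodule.span F (genSet e) := by
  have h := shift_mem (F := F) e k m x
  rwa [hx, Finsupp.single_zero, sub_zero] at h

private noncomputable def phiMap (F : Type*) [Field F] {H : Type*} [Ring H] [Algebra F H]
    (e : H) (p : ℤ) (N : ℕ) : (ℤ →₀ H) →ₗ[F] H :=
  Finsupp.lsum F fun k =>
    LinearMap.mulRight F (if (2 : ℤ) ∣ (k + p) then e ^ ((k + p + 2 * N) / 2).toNat else 0)

private lemma phi_single (e : H) (p : ℤ) (N : ℕ) (k : ℤ) (x : H) :
    phiMap F e p N (Finsupp.single k x)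
      = x * (if (2 : ℤ) ∣ (k + p) then e ^ ((k + p + 2 * N) / 2).toNat else 0) := by
  simp only [phiMap, Finsupp.lsum_single, LinearMap.mulRight_apply]

private lemma phi_vanish (e : H) (p : ℤ) {g : ℤ →₀ H}
    (hg : g ∈ Submodule.span F (genSet e)) :
    ∃ N : ℕ, ∀ N' : ℕ, N ≤ N' → phiMap F e p N' g = 0 := by
  induction hg using Submodule.span_induction with
  | mem a ha =>
    obtain ⟨x, n, m, rfl⟩ := ha
    refine ⟨(m + p).natAbs, fun N' hN' => ?_⟩
    rw [map_sub, phi_single, phi_single]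
    by_cases hdvd : (2 : ℤ) ∣ (m + p)
    · rw [if_pos (by omega : (2:ℤ) ∣ (2 * (n:ℤ) + m + p)), if_pos hdvd]
      rw [show ((2 * (n:ℤ) + m + p + 2 * N') / 2).toNat
          = n + ((m + p + 2 * N') / 2).toNat by omega]
      rw [pow_add, ← mul_assoc, sub_self]
    · rw [if_neg (by omega : ¬ (2:ℤ) ∣ (2 * (n:ℤ) + m + p)), if_neg hdvd]
      simp
  | zero => exact ⟨0, by simp⟩
  | add a b ha hb iha ihb =>
    obtain ⟨N₁, h₁⟩ := iha
    obtain ⟨N₂, h₂⟩ := ihb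
    exact ⟨max N₁ N₂, fun N' hN' => by
      rw [map_add, h₁ N' (le_trans (le_max_left _ _) hN'),
        h₂ N' (le_trans (le_max_right _ _) hN'), add_zero]⟩
  | smul c a ha iha =>
    obtain ⟨N, h⟩ := iha
    exact ⟨N, fun N' hN' => by rw [map_smul, h N' hN', smul_zero]⟩

private lemma rep_mono (e : H) (f : ℤ →₀ H) (x₁ x₂ : H) (n n'' : ℤ) (h : n ≤ n'')
    (hf : f - (Finsupp.single (-2 * n) x₁ + Finsupp.single (-2 * n - 1) x₂)
      ∈ Submodule.span F (genSet e)) :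
    ∃ y₁ y₂ : H, f - (Finsupp.single (-2 * n'') y₁ + Finsupp.single (-2 * n'' - 1) y₂)
      ∈ Submodule.span F (genSet e) := by
  set j : ℕ := (n'' - n).toNat with hj
  refine ⟨x₁ * e ^ j, x₂ * e ^ j, ?_⟩
  have h1 := shift_mem (F := F) e (-2 * n) j x₁
  have h2 := shift_mem (F := F) e (-2 * n - 1) j x₂
  rw [show -2 * n - 2 * (j:ℤ) = -2 * n'' by omega] at h1
  rw [show -2 * n - 1 - 2 * (j:ℤ) = -2 * n'' - 1 by omega] at h2
  have hmem := Submodule.add_mem _ (Submodule.add_mem _ hf h1) h2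
  convert hmem using 1
  abel

private lemma rep (e : H) (f : ℤ →₀ H) :
    ∃ (x₁ x₂ : H) (n : ℤ),
      f - (Finsupp.single (-2 * n) x₁ + Finsupp.single (-2 * n - 1) x₂)
        ∈ Submodule.span F (genSet e) := by
  induction f using Finsupp.induction with
  | zero => exact ⟨0, 0, 0, by simp⟩
  | single_add k x g hk hx ih =>
    obtain ⟨y₁, y₂, n, hg⟩ := ih
    set n'' : ℤ := max n (k.natAbs : ℤ) with hn''
    have hn1 : n ≤ n'' := le_max_left _ _
    have hn2 : (k.natAbs : ℤ) ≤ n'' := le_max_right _ _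
    obtain ⟨z₁, z₂, hz⟩ := rep_mono e g y₁ y₂ n n'' hn1 hg
    rcases Int.even_or_odd k with ⟨a, ha⟩ | ⟨a, ha⟩
    · set j : ℕ := (a + n'').toNat with hj
      have hs := shift_mem (F := F) e k j x
      rw [show k - 2 * (j:ℤ) = -2 * n'' by omega] at hs
      refine ⟨x * e ^ j + z₁, z₂, n'', ?_⟩
      have hmem := Submodule.add_mem _ hs hz
      convert hmem using 1
      rw [Finsupp.single_add]
      abel
    · set j : ℕ := (a + 1 + n'').toNat with hj
      have hs := shift_mem (F := F) e k j x
      rw [show k - 2 * (j:ℤ) = -2 * n'' - 1 by omega] at hs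
      refine ⟨z₁, x * e ^ j + z₂, n'', ?_⟩
      have hmem := Submodule.add_mem _ hs hz
      convert hmem using 1
      rw [Finsupp.single_add]
      abel

end Aux

/-- Let `H[e^{−1/2}] := Ĥ/I` with quotient map `ev`.  (a) Every element is of the
form `ev(x₁ t^{−n} + x₂ t^{−n−1/2})` with `x₁, x₂ ∈ H`, `n ∈ ℤ`.  (b) Two such
expressions (with the same `n`) are equal iff `(x₁ − x₁') eᵐ = (x₂ − x₂') eᵐ = 0`
for some `m ≥ 0`.  (Index `k : ℤ` stands for `t^(k/2)`.) -/
theorem stmt11 {F H : Type*} [Field F] [CharZero F] [Ring H] [Algebra F H]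
    (e : H)
    (hln : ∀ y : H, ∃ N : ℕ, (fun y => e * y - y * e)^[N] y = 0)
    (I : Submodule F (ℤ →₀ H))
    (hI : I = Submodule.span F
      {a | ∃ (x : H) (n : ℕ) (m : ℤ),
        a = Finsupp.single (2 * (n : ℤ) + m) x - Finsupp.single m (x * e ^ n)}) :
    (∀ u : (ℤ →₀ H) ⧸ I, ∃ (x₁ x₂ : H) (n : ℤ),
      u = Submodule.mkQ I
        (Finsupp.single (-2 * n) x₁ + Finsupp.single (-2 * n - 1) x₂)) ∧
    (∀ (x₁ x₂ x₁' x₂' : H) (n : ℤ),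
      Submodule.mkQ I (Finsupp.single (-2 * n) x₁ + Finsupp.single (-2 * n - 1) x₂) =
        Submodule.mkQ I
          (Finsupp.single (-2 * n) x₁' + Finsupp.single (-2 * n - 1) x₂') ↔
      ∃ m : ℕ, (x₁ - x₁') * e ^ m = 0 ∧ (x₂ - x₂') * e ^ m = 0) := by
  subst hI
  constructor
  · intro u
    obtain ⟨f, rfl⟩ := Submodule.mkQ_surjective _ u
    obtain ⟨x₁, x₂, n, hf⟩ := rep (F := F) e f
    exact ⟨x₁, x₂, n, (Submodule.Quotient.eq _).mpr hf⟩
  · intro x₁ x₂ x₁' x₂' n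
    have hdiff : (Finsupp.single (-2 * n) x₁ + Finsupp.single (-2 * n - 1) x₂)
        - (Finsupp.single (-2 * n) x₁' + Finsupp.single (-2 * n - 1) x₂')
        = Finsupp.single (-2 * n) (x₁ - x₁') + Finsupp.single (-2 * n - 1) (x₂ - x₂') := by
      rw [Finsupp.single_sub, Finsupp.single_sub]
      abel
    constructor
    · intro h
      rw [Submodule.mkQ_apply, Submodule.mkQ_apply, Submodule.Quotient.eq, hdiff] at h
      obtain ⟨N₀, h₀⟩ := phi_vanish e 0 h
      obtain ⟨N₁, h₁⟩ := phi_vanish e 1 h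
      set N' : ℕ := max N₀ N₁ with hN'
      refine ⟨((N' : ℤ) - n).toNat, ?_, ?_⟩
      · have hv := h₀ N' (le_max_left _ _)
        rw [map_add, phi_single, phi_single,
          if_pos (by omega : (2:ℤ) ∣ (-2 * n + 0)),
          if_neg (by omega : ¬ (2:ℤ) ∣ (-2 * n - 1 + 0)),
          show ((-2 * n + 0 + 2 * (N' : ℤ)) / 2).toNat = ((N' : ℤ) - n).toNat by omega,
          mul_zero, add_zero] at hv
        exact hv
      · have hv := h₁ N' (le_max_right _ _)
        rw [map_add, phi_single, phi_single,
          if_neg (by omega : ¬ (2:ℤ) ∣ (-2 * n + 1)),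
          if_pos (by omega : (2:ℤ) ∣ (-2 * n - 1 + 1)),
          show ((-2 * n - 1 + 1 + 2 * (N' : ℤ)) / 2).toNat = ((N' : ℤ) - n).toNat by omega,
          mul_zero, zero_add] at hv
        exact hv
    · rintro ⟨m, hm1, hm2⟩
      rw [Submodule.mkQ_apply, Submodule.mkQ_apply, Submodule.Quotient.eq, hdiff]
      exact Submodule.add_mem _ (single_mem_of_ann e _ _ m hm1)
        (single_mem_of_ann e _ _ m hm2)
end

section
/- Let W_x = F⟨x, ∂_x⟩ with [x, ∂_x] = −1 and let σ_x' be the involution σ_x'(x) = −x, σ_x'(∂_x) = −∂_x. Then the fixed subalgebra (W_x)^{σ_x'} is generated by x², x∂_x, and ∂_x², and its quotient skew field is isomorphic to the quotient skew field of the first Weyl algebra W₁. (I.e., (W_x)^{σ_x'} ≈ W₁ in the notation A ≈ B meaning isomorphic quotient fields; concretely, the elements X := x² and D := (1/2)x^{−1}∂_x of the localized algebra satisfy [X, D] = −1 and generate the quotient field of the fixed subalgebra.) -/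
set_option maxHeartbeats 2000000

/-- Let `K` be the quotient skew field of the Weyl algebra `W_x = F⟨x,∂ₓ⟩`
(`[x,∂ₓ] = −1`): a division `F`-algebra generated as a division algebra by `x, ∂ₓ`.
Let `σ` be the involution with `σ(x) = −x`, `σ(∂ₓ) = −∂ₓ`.  Then: the fixed
subalgebra of `W_x` is generated by `x², x∂ₓ, ∂ₓ²`; the elements `X := x²` and
`D := (1/2)x⁻¹∂ₓ` satisfy `[X, D] = −1`; and `X, D` generate the fixed skew subfield
`K^σ`, so `(W_x)^{σ} ≈ W₁` (isomorphic quotient skew fields). -/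
theorem stmt16 {F K : Type*} [Field F] [CharZero F] [DivisionRing K] [Algebra F K]
    (x dx : K) (hw : dx * x - x * dx = 1)
    (hgen : ∀ T : Subalgebra F K, x ∈ T → dx ∈ T →
      (∀ t ∈ T, t⁻¹ ∈ T) → ∀ a : K, a ∈ T)
    (σ : K →ₐ[F] K)
    (hσx : σ x = -x) (hσdx : σ dx = -dx) (hσ2 : ∀ a, σ (σ a) = a) :
    ({a : K | a ∈ Algebra.adjoin F {x, dx} ∧ σ a = a} =
      (Algebra.adjoin F {x ^ 2, x * dx, dx ^ 2} : Subalgebra F K)) ∧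
    (x ^ 2 * (((1 : F) / 2) • (x⁻¹ * dx)) - (((1 : F) / 2) • (x⁻¹ * dx)) * x ^ 2
      = -1) ∧
    (∀ T : Subalgebra F K, x ^ 2 ∈ T → ((1 : F) / 2) • (x⁻¹ * dx) ∈ T →
      (∀ t ∈ T, t⁻¹ ∈ T) → ∀ a : K, σ a = a → a ∈ T) := by
  refine ⟨?_, ?_, ?_⟩
  · have hdxx : dx * x = 1 + x * dx := sub_eq_iff_eq_add.mp hw
    set S := Algebra.adjoin F {x ^ 2, x * dx, dx ^ 2} with hS
    -- σ fixes S elementwise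
    have hfixS : ∀ s ∈ S, σ s = s := by
      intro s hs
      induction hs using Algebra.adjoin_induction with
      | mem t ht =>
        rcases ht with h | h | h
        · subst h; rw [map_pow, hσx]; noncomm_ring
        · subst h; rw [map_mul, hσx, hσdx]; noncomm_ring
        · subst h; rw [map_pow, hσdx]; noncomm_ring
      | algebraMap r => exact σ.commutes r
      | add a b _ _ ha hb => rw [map_add, ha, hb]
      | mul a b _ _ ha hb => rw [map_mul, ha, hb]
    -- generators are in S
    have hx2S : x ^ 2 ∈ S := Algebra.subset_adjoin (by left; rfl)
    have hxdxS : x * dx ∈ S := Algebra.subset_adjoin (by right; left; rfl)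
    have hdx2S : dx ^ 2 ∈ S := Algebra.subset_adjoin (by right; right; rfl)
    have hdxxS : dx * x ∈ S := by rw [hdxx]; exact S.add_mem S.one_mem hxdxS
    -- Lemma B: right multiplication by x and dx
    have hB : ∀ s ∈ S, ∃ a ∈ S, ∃ b ∈ S, ∃ c ∈ S, ∃ d ∈ S,
        s * x = x * a + dx * b ∧ s * dx = x * c + dx * d := by
      intro s hs
      induction hs using Algebra.adjoin_induction with
      | mem t ht =>
        rcases ht with h | h | h
        · subst h
          exact ⟨x ^ 2, hx2S, 0, S.zero_mem, x * dx, hxdxS, 0, S.zero_mem,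
            by rw [pow_two]; noncomm_ring, by rw [pow_two]; noncomm_ring⟩
        · subst h
          refine ⟨1 + x * dx, S.add_mem S.one_mem hxdxS, 0, S.zero_mem,
            dx ^ 2, hdx2S, 0, S.zero_mem, ?_, ?_⟩
          · rw [mul_assoc, hdxx]; noncomm_ring
          · rw [pow_two]; noncomm_ring
        · subst h
          refine ⟨0, S.zero_mem, 1 + x * dx, S.add_mem S.one_mem hxdxS,
            0, S.zero_mem, dx ^ 2, hdx2S, ?_, ?_⟩
          · rw [pow_two, mul_assoc, hdxx]; noncomm_ring
          · rw [pow_two]; noncomm_ring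
      | algebraMap r =>
        exact ⟨algebraMap F K r, S.algebraMap_mem r, 0, S.zero_mem,
          0, S.zero_mem, algebraMap F K r, S.algebraMap_mem r,
          by rw [Algebra.commutes]; noncomm_ring, by rw [Algebra.commutes]; noncomm_ring⟩
      | add s t _ _ hs ht =>
        obtain ⟨a, ha, b, hb, c, hc, d, hd, e1, e2⟩ := hs
        obtain ⟨a', ha', b', hb', c', hc', d', hd', e1', e2'⟩ := ht
        exact ⟨a + a', S.add_mem ha ha', b + b', S.add_mem hb hb',
          c + c', S.add_mem hc hc', d + d', S.add_mem hd hd',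
          by rw [add_mul, e1, e1']; noncomm_ring, by rw [add_mul, e2, e2']; noncomm_ring⟩
      | mul s t _ _ hs ht =>
        obtain ⟨a, ha, b, hb, c, hc, d, hd, e1, e2⟩ := hs
        obtain ⟨a', ha', b', hb', c', hc', d', hd', e1', e2'⟩ := ht
        refine ⟨a * a' + c * b', S.add_mem (S.mul_mem ha ha') (S.mul_mem hc hb'),
          b * a' + d * b', S.add_mem (S.mul_mem hb ha') (S.mul_mem hd hb'),
          a * c' + c * d', S.add_mem (S.mul_mem ha hc') (S.mul_mem hc hd'),
          b * c' + d * d', S.add_mem (S.mul_mem hb hc') (S.mul_mem hd hd'), ?_, ?_⟩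
        · rw [mul_assoc, e1', mul_add, ← mul_assoc s x, e1, ← mul_assoc s dx, e2]
          noncomm_ring
        · rw [mul_assoc, e2', mul_add, ← mul_assoc s x, e1, ← mul_assoc s dx, e2]
          noncomm_ring
    -- Lemma C: decomposition of adjoin {x, dx}
    have hC : ∀ a ∈ Algebra.adjoin F {x, dx}, ∃ e ∈ S, ∃ u ∈ S, ∃ v ∈ S,
        a = e + x * u + dx * v := by
      intro a ha
      induction ha using Algebra.adjoin_induction with
      | mem t ht =>
        rcases ht with h | h
        · subst h
          exact ⟨0, S.zero_mem, 1, S.one_mem, 0, S.zero_mem, by noncomm_ring⟩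
        · subst h
          exact ⟨0, S.zero_mem, 0, S.zero_mem, 1, S.one_mem, by noncomm_ring⟩
      | algebraMap r =>
        exact ⟨algebraMap F K r, S.algebraMap_mem r, 0, S.zero_mem, 0, S.zero_mem,
          by noncomm_ring⟩
      | add a b _ _ ha hb =>
        obtain ⟨e, he, u, hu, v, hv, hd⟩ := ha
        obtain ⟨e', he', u', hu', v', hv', hd'⟩ := hb
        exact ⟨e + e', S.add_mem he he', u + u', S.add_mem hu hu',
          v + v', S.add_mem hv hv', by rw [hd, hd']; noncomm_ring⟩
      | mul a b _ _ ha hb =>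
        obtain ⟨e, he, u, hu, v, hv, hd⟩ := ha
        obtain ⟨e', he', u', hu', v', hv', hd'⟩ := hb
        -- decompose s * b for s ∈ S
        have step : ∀ s, s ∈ S → ∃ e₀ ∈ S, ∃ u₀ ∈ S, ∃ v₀ ∈ S,
            s * b = e₀ + x * u₀ + dx * v₀ := by
          intro s hs
          obtain ⟨α, hα, β, hβ, γ, hγ, δ, hδ, f1, f2⟩ := hB s hs
          refine ⟨s * e', S.mul_mem hs he', α * u' + γ * v',
            S.add_mem (S.mul_mem hα hu') (S.mul_mem hγ hv'),
            β * u' + δ * v',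
            S.add_mem (S.mul_mem hβ hu') (S.mul_mem hδ hv'), ?_⟩
          rw [hd', mul_add, mul_add, ← mul_assoc s x, f1, ← mul_assoc s dx, f2]
          noncomm_ring
        obtain ⟨e₁, he₁, u₁, hu₁, v₁, hv₁, g1⟩ := step e he
        obtain ⟨e₂, he₂, u₂, hu₂, v₂, hv₂, g2⟩ := step u hu
        obtain ⟨e₃, he₃, u₃, hu₃, v₃, hv₃, g3⟩ := step v hv
        -- a * b = e*b + x*(u*b) + dx*(v*b)
        refine ⟨e₁ + (x ^ 2 * u₂ + (x * dx) * v₂) + ((dx * x) * u₃ + dx ^ 2 * v₃),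
          S.add_mem (S.add_mem he₁ (S.add_mem (S.mul_mem hx2S hu₂) (S.mul_mem hxdxS hv₂)))
            (S.add_mem (S.mul_mem hdxxS hu₃) (S.mul_mem hdx2S hv₃)),
          u₁ + e₂, S.add_mem hu₁ he₂, v₁ + e₃, S.add_mem hv₁ he₃, ?_⟩
        have : a * b = e * b + x * (u * b) + dx * (v * b) := by
          rw [hd]; noncomm_ring
        rw [this, g1, g2, g3]; noncomm_ring
    -- conclude
    ext a
    simp only [Set.mem_setOf_eq, SetLike.mem_coe]
    constructor
    · rintro ⟨ha, hfa⟩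
      obtain ⟨e, he, u, hu, v, hv, hd⟩ := hC a ha
      have hσa : σ a = e - (x * u + dx * v) := by
        rw [hd, map_add, map_add, map_mul, map_mul, hσx, hσdx,
          hfixS e he, hfixS u hu, hfixS v hv]
        noncomm_ring
      have hz : (x * u + dx * v) + (x * u + dx * v) = 0 := by
        have heq : e - (x * u + dx * v) = e + x * u + dx * v := by
          rw [← hσa, hfa, hd]
        have h3 : e - (x * u + dx * v) = e + (x * u + dx * v) :=
          heq.trans (add_assoc e _ _)
        have h4 : e + (x * u + dx * v) - (e - (x * u + dx * v)) = 0 := by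
          rw [h3, sub_self]
        calc (x * u + dx * v) + (x * u + dx * v)
            = e + (x * u + dx * v) - (e - (x * u + dx * v)) := by abel
          _ = 0 := h4
      have hz0 : x * u + dx * v = 0 := by
        have h2 : (2 : F) • (x * u + dx * v) = 0 := by rw [two_smul]; exact hz
        have := smul_eq_zero.mp h2
        rcases this with h | h
        · exact absurd h two_ne_zero
        · exact h
      have : a = e := by rw [hd, add_assoc, hz0, add_zero]
      rw [this]; exact he
    · intro ha
      refine ⟨?_, hfixS a ha⟩
      have hle : S ≤ Algebra.adjoin F {x, dx} := by
        rw [hS]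
        apply Algebra.adjoin_le
        rintro t (h | h | h) <;> subst h
        · exact pow_mem (Algebra.subset_adjoin (by left; rfl)) 2
        · exact mul_mem (Algebra.subset_adjoin (by left; rfl))
            (Algebra.subset_adjoin (by right; rfl))
        · exact pow_mem (Algebra.subset_adjoin (by right; rfl)) 2
      exact hle ha
  · have hx : x ≠ 0 := by
      rintro rfl; simp at hw
    have hxy : x * x⁻¹ = 1 := mul_inv_cancel₀ hx
    have hyx : x⁻¹ * x = 1 := inv_mul_cancel₀ hx
    have hdxx : dx * x = 1 + x * dx := sub_eq_iff_eq_add.mp hw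
    have h1 : x ^ 2 * (x⁻¹ * dx) = x * dx := by
      rw [pow_two, mul_assoc, ← mul_assoc x x⁻¹, hxy, one_mul]
    have h2 : (x⁻¹ * dx) * x ^ 2 = x * dx + 2 := by
      have e : dx * (x * x) = x * (x * dx + 2) := by
        rw [← mul_assoc, hdxx]
        have : x * dx * x = x * (1 + x * dx) := by rw [mul_assoc, hdxx]
        rw [add_mul, one_mul, this]; noncomm_ring
      rw [pow_two, mul_assoc, e, ← mul_assoc, hyx, one_mul]
    rw [mul_smul_comm, smul_mul_assoc, ← smul_sub, h1, h2]
    have : x * dx - (x * dx + 2) = (-2 : K) := by noncomm_ring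
    rw [this]
    have : ((-2 : K)) = ((-2 : F)) • (1 : K) := by
      rw [Algebra.algebraMap_eq_smul_one (R := F) (A := K) (-2) |>.symm, map_neg, map_ofNat]
    rw [this, smul_smul]
    norm_num
  · have hx : x ≠ 0 := by rintro rfl; simp at hw
    have hxy : x * x⁻¹ = 1 := mul_inv_cancel₀ hx
    have hyx : x⁻¹ * x = 1 := inv_mul_cancel₀ hx
    have hdxx : dx * x = 1 + x * dx := sub_eq_iff_eq_add.mp hw
    have half2 : ∀ z : K, ((1 : F) / 2) • (z + z) = z := by
      intro z
      rw [← two_smul F z, smul_smul]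
      norm_num
    intro T hXT hDT hTinv a0 hfa0
    -- the conjugation-stable core of T
    set T0 : Subalgebra F K :=
      { carrier := {t : K | ∀ n : ℕ, x⁻¹ ^ n * t * x ^ n ∈ T}
        mul_mem' := by
          intro t s ht hs n
          have hxn : x ^ n * x⁻¹ ^ n = 1 := by
            rw [inv_pow]; exact mul_inv_cancel₀ (pow_ne_zero n hx)
          have key : x⁻¹ ^ n * (t * s) * x ^ n
              = (x⁻¹ ^ n * t * x ^ n) * (x⁻¹ ^ n * s * x ^ n) := by
            have e1 : (x⁻¹ ^ n * t * x ^ n) * (x⁻¹ ^ n * s * x ^ n)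
                = x⁻¹ ^ n * t * ((x ^ n * x⁻¹ ^ n) * (s * x ^ n)) := by
              noncomm_ring
            rw [e1, hxn, one_mul]; noncomm_ring
          rw [key]; exact T.mul_mem (ht n) (hs n)
        one_mem' := by
          intro n
          have : x⁻¹ ^ n * 1 * x ^ n = 1 := by
            rw [mul_one, inv_pow]; exact inv_mul_cancel₀ (pow_ne_zero n hx)
          rw [this]; exact T.one_mem
        add_mem' := by
          intro t s ht hs n
          have : x⁻¹ ^ n * (t + s) * x ^ n
              = x⁻¹ ^ n * t * x ^ n + x⁻¹ ^ n * s * x ^ n := by noncomm_ring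
          rw [this]; exact T.add_mem (ht n) (hs n)
        zero_mem' := by
          intro n
          rw [mul_zero, zero_mul]; exact T.zero_mem
        algebraMap_mem' := by
          intro r n
          have : x⁻¹ ^ n * algebraMap F K r * x ^ n = algebraMap F K r := by
            rw [← Algebra.commutes r (x⁻¹ ^ n), mul_assoc, inv_pow,
              inv_mul_cancel₀ (pow_ne_zero n hx), mul_one]
          rw [this]; exact T.algebraMap_mem r } with hT0
    have memT0 : ∀ t : K, t ∈ T0 ↔ ∀ n : ℕ, x⁻¹ ^ n * t * x ^ n ∈ T := fun t => Iff.rfl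
    have hT0T : ∀ t ∈ T0, t ∈ T := by
      intro t ht
      have := (memT0 t).mp ht 0
      simpa using this
    have hT0c : ∀ t ∈ T0, x⁻¹ * t * x ∈ T0 := by
      intro t ht
      rw [memT0]; intro n
      have e : x⁻¹ ^ n * (x⁻¹ * t * x) * x ^ n = x⁻¹ ^ (n + 1) * t * x ^ (n + 1) := by
        rw [pow_succ x⁻¹ n, pow_succ' x n]; noncomm_ring
      rw [e]; exact (memT0 t).mp ht (n + 1)
    have hT0inv : ∀ t ∈ T0, t⁻¹ ∈ T0 := by
      intro t ht
      rw [memT0]; intro n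
      have e : x⁻¹ ^ n * t⁻¹ * x ^ n = (x⁻¹ ^ n * t * x ^ n)⁻¹ := by
        rw [mul_inv_rev, mul_inv_rev, inv_pow x n, inv_inv]
        noncomm_ring
      rw [e]; exact hTinv _ ((memT0 t).mp ht n)
    have hx2T0 : x ^ 2 ∈ T0 := by
      rw [memT0]; intro n
      have e : x⁻¹ ^ n * x ^ 2 * x ^ n = x ^ 2 := by
        rw [mul_assoc, ← pow_add, add_comm 2 n, pow_add, ← mul_assoc, inv_pow,
          inv_mul_cancel₀ (pow_ne_zero n hx), one_mul]
      rw [e]; exact hXT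
    have hydxT : x⁻¹ * dx ∈ T := by
      have e : x⁻¹ * dx = (2 : F) • (((1 : F) / 2) • (x⁻¹ * dx)) := by
        rw [smul_smul]; norm_num
      rw [e]; exact T.smul_mem hDT 2
    have hyyT : x⁻¹ * x⁻¹ ∈ T := by
      have e : x⁻¹ * x⁻¹ = (x ^ 2)⁻¹ := by rw [sq, mul_inv_rev]
      rw [e]; exact hTinv _ hXT
    have hydxT0 : x⁻¹ * dx ∈ T0 := by
      rw [memT0]; intro n
      have key : ∀ m : ℕ, x⁻¹ ^ m * (x⁻¹ * dx) * x ^ m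
          = x⁻¹ * dx + m • (x⁻¹ * x⁻¹) := by
        intro m; induction m with
        | zero => simp
        | succ k ih =>
          have e0 : x⁻¹ ^ (k + 1) * (x⁻¹ * dx) * x ^ (k + 1)
              = x⁻¹ * (x⁻¹ ^ k * (x⁻¹ * dx) * x ^ k) * x := by
            rw [pow_succ' x⁻¹ k, pow_succ x k]; noncomm_ring
          have e1 : x⁻¹ * (x⁻¹ * dx) * x = x⁻¹ * dx + x⁻¹ * x⁻¹ := by
            have t1 : x⁻¹ * (x⁻¹ * dx) * x = x⁻¹ * (x⁻¹ * (dx * x)) := by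
              noncomm_ring
            rw [t1, hdxx, mul_add, mul_one, ← mul_assoc x⁻¹ x dx, hyx, one_mul,
              mul_add]
            exact add_comm _ _
          have e2 : x⁻¹ * (x⁻¹ * x⁻¹) * x = x⁻¹ * x⁻¹ := by
            have t1 : x⁻¹ * (x⁻¹ * x⁻¹) * x = x⁻¹ * x⁻¹ * (x⁻¹ * x) := by
              noncomm_ring
            rw [t1, hyx, mul_one]
          rw [e0, ih, mul_add, add_mul, mul_smul_comm, smul_mul_assoc, e1, e2,
            succ_nsmul]
          abel
      rw [key n]
      exact T.add_mem hydxT (nsmul_mem hyyT n)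
    -- even/odd components
    set p : K → K := fun a => ((1 : F) / 2) • (a + σ a) with hp
    set q : K → K := fun a => x⁻¹ * (((1 : F) / 2) • (a - σ a)) with hq
    have hdec : ∀ a : K, a = p a + x * q a := by
      intro a
      have e : p a + x * q a = a := by
        simp only [hp, hq]
        rw [← mul_assoc x x⁻¹, hxy, one_mul, ← smul_add, add_add_sub_cancel, half2]
      exact e.symm
    have hsig : ∀ a : K, σ a = p a - x * q a := by
      intro a
      have e : p a - x * q a = σ a := by
        simp only [hp, hq]
        rw [← mul_assoc x x⁻¹, hxy, one_mul, ← smul_sub, add_sub_sub_cancel, half2]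
      exact e.symm
    have hqx : ∀ a : K, q a * x = x * (x⁻¹ * q a * x) := by
      intro a
      have t1 : x * (x⁻¹ * q a * x) = (x * x⁻¹) * (q a * x) := by noncomm_ring
      rw [t1, hxy, one_mul]
    have hp1 : p 1 = 1 := by
      simp only [hp]; rw [map_one]; exact half2 1
    have hq1 : q 1 = 0 := by
      simp only [hq]; rw [map_one, sub_self, smul_zero, mul_zero]
    have hpmul : ∀ a b : K, p (a * b)
        = p a * p b + x ^ 2 * ((x⁻¹ * q a * x) * q b) := by
      intro a b
      have e1 : a * b = (p a + x * q a) * (p b + x * q b) := by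
        rw [← hdec a, ← hdec b]
      have e2 : σ (a * b) = (p a - x * q a) * (p b - x * q b) := by
        rw [map_mul, hsig a, hsig b]
      have e3 : a * b + σ (a * b)
          = (p a * p b + (x * q a) * (x * q b))
            + (p a * p b + (x * q a) * (x * q b)) := by
        rw [e2]; conv_lhs => rw [e1]
        noncomm_ring
      have e4 : (x * q a) * (x * q b) = x ^ 2 * ((x⁻¹ * q a * x) * q b) := by
        have t1 : (x * q a) * (x * q b) = x * (q a * x) * q b := by noncomm_ring
        rw [t1, hqx a]; noncomm_ring
      simp only [hp]
      rw [e3, half2, e4]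
    have hqmul : ∀ a b : K, q (a * b)
        = (x⁻¹ * p a * x) * q b + q a * p b := by
      intro a b
      have e1 : a * b = (p a + x * q a) * (p b + x * q b) := by
        rw [← hdec a, ← hdec b]
      have e2 : σ (a * b) = (p a - x * q a) * (p b - x * q b) := by
        rw [map_mul, hsig a, hsig b]
      have e5 : a * b - σ (a * b)
          = (p a * (x * q b) + (x * q a) * p b)
            + (p a * (x * q b) + (x * q a) * p b) := by
        rw [e2]; conv_lhs => rw [e1]
        noncomm_ring
      have t2 : x⁻¹ * (p a * (x * q b) + (x * q a) * p b)
          = (x⁻¹ * p a * x) * q b + (x⁻¹ * x) * (q a * p b) := by noncomm_ring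
      simp only [hq]
      rw [e5, half2, t2, hyx, one_mul]
    have hpadd : ∀ a b : K, p (a + b) = p a + p b := by
      intro a b; simp only [hp]; rw [map_add, ← smul_add]
      congr 1; abel
    have hqadd : ∀ a b : K, q (a + b) = q a + q b := by
      intro a b; simp only [hq]
      rw [map_add, ← mul_add, ← smul_add]
      congr 2; abel
    have hpalg : ∀ r : F, p (algebraMap F K r) = algebraMap F K r := by
      intro r; simp only [hp]; rw [σ.commutes]; exact half2 _
    have hqalg : ∀ r : F, q (algebraMap F K r) = 0 := by
      intro r; simp only [hq]; rw [σ.commutes, sub_self, smul_zero, mul_zero]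
    have hp0 : p 0 = 0 := by
      simp only [hp]; rw [map_zero, add_zero, smul_zero]
    have hq0' : q 0 = 0 := by
      simp only [hq]; rw [map_zero, sub_zero, smul_zero, mul_zero]
    set T' : Subalgebra F K :=
      { carrier := {a : K | p a ∈ T0 ∧ q a ∈ T0}
        mul_mem' := by
          rintro a b ⟨hpa, hqa⟩ ⟨hpb, hqb⟩
          constructor
          · rw [hpmul]
            exact T0.add_mem (T0.mul_mem hpa hpb)
              (T0.mul_mem hx2T0 (T0.mul_mem (hT0c _ hqa) hqb))
          · rw [hqmul]
            exact T0.add_mem (T0.mul_mem (hT0c _ hpa) hqb) (T0.mul_mem hqa hpb)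
        one_mem' := ⟨by rw [hp1]; exact T0.one_mem, by rw [hq1]; exact T0.zero_mem⟩
        add_mem' := by
          rintro a b ⟨hpa, hqa⟩ ⟨hpb, hqb⟩
          exact ⟨by rw [hpadd]; exact T0.add_mem hpa hpb,
            by rw [hqadd]; exact T0.add_mem hqa hqb⟩
        zero_mem' := ⟨by rw [hp0]; exact T0.zero_mem, by rw [hq0']; exact T0.zero_mem⟩
        algebraMap_mem' := fun r =>
          ⟨by rw [hpalg]; exact T0.algebraMap_mem r,
           by rw [hqalg]; exact T0.zero_mem⟩ } with hT'
    have memT' : ∀ t : K, t ∈ T' ↔ p t ∈ T0 ∧ q t ∈ T0 := fun t => Iff.rfl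
    -- T' is closed under inverses
    have hT'inv : ∀ t ∈ T', t⁻¹ ∈ T' := by
      intro t ht
      obtain ⟨hpt, hqt⟩ := (memT' t).mp ht
      by_cases ht0 : t = 0
      · rw [ht0, inv_zero]; exact T'.zero_mem
      have hinv : t * t⁻¹ = 1 := mul_inv_cancel₀ ht0
      have eqp : p t * p t⁻¹ + x ^ 2 * ((x⁻¹ * q t * x) * q t⁻¹) = 1 := by
        rw [← hpmul t t⁻¹, hinv, hp1]
      have eqq : (x⁻¹ * p t * x) * q t⁻¹ + q t * p t⁻¹ = 0 := by
        rw [← hqmul t t⁻¹, hinv, hq1]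
      by_cases hq0 : q t = 0
      · have htp : t = p t := by
          conv_lhs => rw [hdec t]
          rw [hq0, mul_zero, add_zero]
        have hfix : σ t = t := by rw [hsig t, hq0, mul_zero, sub_zero, ← htp]
        have h1 : p t⁻¹ = t⁻¹ := by
          simp only [hp]; rw [map_inv₀, hfix]; exact half2 _
        have h2 : q t⁻¹ = 0 := by
          simp only [hq]; rw [map_inv₀, hfix, sub_self, smul_zero, mul_zero]
        rw [memT', h1, h2]
        refine ⟨?_, T0.zero_mem⟩
        rw [htp]; exact hT0inv _ hpt
      · have hpt' : p t⁻¹ = (q t)⁻¹ * (-((x⁻¹ * p t * x) * q t⁻¹)) := by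
          have h0 : q t * p t⁻¹ = -((x⁻¹ * p t * x) * q t⁻¹) :=
            eq_neg_of_add_eq_zero_right eqq
          rw [← h0, ← mul_assoc, inv_mul_cancel₀ hq0, one_mul]
        have hM : (x ^ 2 * (x⁻¹ * q t * x) - p t * (q t)⁻¹ * (x⁻¹ * p t * x))
            * q t⁻¹ = 1 := by
          calc (x ^ 2 * (x⁻¹ * q t * x) - p t * (q t)⁻¹ * (x⁻¹ * p t * x)) * q t⁻¹
              = p t * ((q t)⁻¹ * (-((x⁻¹ * p t * x) * q t⁻¹)))
                + x ^ 2 * ((x⁻¹ * q t * x) * q t⁻¹) := by noncomm_ring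
            _ = p t * p t⁻¹ + x ^ 2 * ((x⁻¹ * q t * x) * q t⁻¹) := by rw [← hpt']
            _ = 1 := eqp
        have hq' : q t⁻¹
            = (x ^ 2 * (x⁻¹ * q t * x) - p t * (q t)⁻¹ * (x⁻¹ * p t * x))⁻¹ :=
          (inv_eq_of_mul_eq_one_right hM).symm
        have hMT0 : x ^ 2 * (x⁻¹ * q t * x) - p t * (q t)⁻¹ * (x⁻¹ * p t * x) ∈ T0 :=
          T0.sub_mem (T0.mul_mem hx2T0 (hT0c _ hqt))
            (T0.mul_mem (T0.mul_mem hpt (hT0inv _ hqt)) (hT0c _ hpt))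
        rw [memT']
        constructor
        · rw [hpt', hq']
          exact T0.mul_mem (hT0inv _ hqt)
            (T0.neg_mem (T0.mul_mem (hT0c _ hpt) (hT0inv _ hMT0)))
        · rw [hq']; exact hT0inv _ hMT0
    -- x and dx are in T'
    have hxT' : x ∈ T' := by
      rw [memT']
      constructor
      · have e : p x = 0 := by
          simp only [hp]; rw [hσx, add_neg_cancel, smul_zero]
        rw [e]; exact T0.zero_mem
      · have e : q x = 1 := by
          simp only [hq]; rw [hσx, sub_neg_eq_add, half2, hyx]
        rw [e]; exact T0.one_mem
    have hdxT' : dx ∈ T' := by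
      rw [memT']
      constructor
      · have e : p dx = 0 := by
          simp only [hp]; rw [hσdx, add_neg_cancel, smul_zero]
        rw [e]; exact T0.zero_mem
      · have e : q dx = x⁻¹ * dx := by
          simp only [hq]; rw [hσdx, sub_neg_eq_add, half2]
        rw [e]; exact hydxT0
    -- conclude
    have hall := hgen T' hxT' hdxT' hT'inv a0
    obtain ⟨hpa0, -⟩ := (memT' a0).mp hall
    have e : p a0 = a0 := by
      simp only [hp]; rw [hfa0]; exact half2 a0
    rw [e] at hpa0
    exact hT0T _ hpa0
end
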